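/- arXiv:math/9201289 — 5 statements merged into one kernel-verified Lean document; each statement's English description precedes it below -/
import Mathlib

section
/- Let f : [0,1] → [0,1] be continuous, let [a,b] and [c,d] be closed subintervals with f([a,b]) ⊇ [c,d], and suppose I_0, I_1, …, I_k are closed subintervals of [c,d] with pairwise disjoint interiors such that I_{i+1} lies to the right of I_i for all i. If moreover f(a) ≤ c and f(b) ≥ d, then there exist closed subintervals J_0, J_1, …, J_k of [a,b] with pairwise disjoint interiors such that J_{i+1} lies to the right of J_i and f(J_i) = I_i for each 0 ≤ i ≤ k. -/
/-!
Pull the intervals back from left to right. Given a start point `s` with `f s ≤ p ≤ q ≤ f b`,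
let `v` be the first point of `[s, b]` where `f` hits `q`, and `u` the last point of `[s, v]`
where `f` hits `p`. By the intermediate value theorem `f` stays in `[p, q]` on `[u, v]` and covers
it, and since `f v = q` lies below the next interval, `v` is a valid start point for the next step.
Intervals placed in this way follow each other, so their interiors are disjoint.
-/

open Set

section Pullback

variable {α δ : Type*} [ConditionallyCompleteLinearOrder α] [TopologicalSpace α] [OrderTopology α]
  [DenselyOrdered α] [LinearOrder δ] [TopologicalSpace δ] [OrderClosedTopology δ] {f : α → δ}

lemma exists_first_hit {s b : α} {y : δ} (hsb : s ≤ b) (hf : ContinuousOn f (Icc s b))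
    (hs : f s ≤ y) (hb : y ≤ f b) : ∃ v ∈ Icc s b, f v = y ∧ ∀ x ∈ Icc s v, f x ≤ y := by
  obtain ⟨x₀, hx₀, hfx₀⟩ := intermediate_value_Icc hsb hf ⟨hs, hb⟩
  set S := Icc s b ∩ f ⁻¹' {y}
  have hSclosed : IsClosed S := hf.preimage_isClosed_of_isClosed isClosed_Icc isClosed_singleton
  have hSbdd : BddBelow S := ⟨s, fun x hx => hx.1.1⟩
  obtain ⟨hv, hfv⟩ : sInf S ∈ S := hSclosed.csInf_mem ⟨x₀, hx₀, hfx₀⟩ hSbdd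
  refine ⟨sInf S, hv, hfv, fun x hx => le_of_not_gt fun hyx => ?_⟩
  have hxb : x ≤ b := hx.2.trans hv.2
  obtain ⟨z, hz, hfz⟩ :=
    intermediate_value_Icc hx.1 (hf.mono (Icc_subset_Icc_right hxb)) ⟨hs, hyx.le⟩
  have hvz : sInf S ≤ z := csInf_le hSbdd ⟨⟨hz.1, hz.2.trans hxb⟩, hfz⟩
  have hxv : x = sInf S := le_antisymm hx.2 (hvz.trans hz.2)
  exact hyx.ne' (hxv ▸ hfv)

lemma exists_last_hit {s v : α} {y : δ} (hsv : s ≤ v) (hf : ContinuousOn f (Icc s v))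
    (hs : f s ≤ y) (hv : y ≤ f v) : ∃ u ∈ Icc s v, f u = y ∧ ∀ x ∈ Icc u v, y ≤ f x := by
  obtain ⟨u, hu, hfu, hge⟩ := exists_first_hit (f := OrderDual.toDual ∘ f ∘ OrderDual.ofDual)
    (s := OrderDual.toDual v) (b := OrderDual.toDual s) (y := OrderDual.toDual y) hsv
    (by rw [Icc_toDual]; exact hf) hv hs
  exact ⟨u, ⟨hu.2, hu.1⟩, hfu, fun x hx => hge x ⟨hx.2, hx.1⟩⟩

lemma exists_image_Icc_eq_Icc {s b : α} {p q : δ} (hsb : s ≤ b) (hf : ContinuousOn f (Icc s b))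
    (hpq : p ≤ q) (hs : f s ≤ p) (hb : q ≤ f b) :
    ∃ u v, s ≤ u ∧ u ≤ v ∧ v ≤ b ∧ f v = q ∧ f '' Icc u v = Icc p q := by
  obtain ⟨v, ⟨hsv, hvb⟩, hfv, hle⟩ := exists_first_hit hsb hf (hs.trans hpq) hb
  have hfsv : ContinuousOn f (Icc s v) := hf.mono (Icc_subset_Icc_right hvb)
  obtain ⟨u, ⟨hsu, huv⟩, hfu, hge⟩ := exists_last_hit hsv hfsv hs (hfv ▸ hpq)
  refine ⟨u, v, hsu, huv, hvb, hfv, (image_subset_iff.2 fun x hx => ?_).antisymm ?_⟩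
  · exact ⟨hge x hx, hle x ⟨hsu.trans hx.1, hx.2⟩⟩
  · simpa only [hfu, hfv] using
      intermediate_value_Icc huv (hfsv.mono (Icc_subset_Icc_left hsu))

lemma exists_chain_image_Icc_eq_Icc {a b : α} (hab : a ≤ b) (hf : ContinuousOn f (Icc a b))
    {p q : ℕ → δ} {k : ℕ} (hpq : ∀ i ≤ k, p i ≤ q i) (hqp : ∀ i < k, q i ≤ p (i + 1))
    (ha : f a ≤ p 0) (hb : ∀ i ≤ k, q i ≤ f b) :
    ∃ u v : ℕ → α, (∀ i ≤ k, a ≤ u i ∧ u i ≤ v i ∧ v i ≤ b ∧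
        f '' Icc (u i) (v i) = Icc (p i) (q i)) ∧ ∀ i < k, v i ≤ u (i + 1) := by
  induction k generalizing a p q with
  | zero =>
    obtain ⟨u₀, v₀, hau, huv, hvb, -, himage⟩ :=
      exists_image_Icc_eq_Icc hab hf (hpq 0 le_rfl) ha (hb 0 le_rfl)
    refine ⟨fun _ => u₀, fun _ => v₀, fun i hi => ?_, fun i hi => absurd hi i.not_lt_zero⟩
    obtain rfl : i = 0 := Nat.le_zero.1 hi
    exact ⟨hau, huv, hvb, himage⟩
  | succ k ih =>
    obtain ⟨u₀, v₀, hau, huv, hvb, hfv, himage⟩ :=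
      exists_image_Icc_eq_Icc hab hf (hpq 0 (by omega)) ha (hb 0 (by omega))
    obtain ⟨u, v, hmem, hchain⟩ := ih (p := fun i => p (i + 1)) (q := fun i => q (i + 1)) hvb
      (hf.mono (Icc_subset_Icc_left (hau.trans huv))) (fun i hi => hpq _ (by omega))
      (fun i hi => hqp _ (by omega)) (hfv ▸ hqp 0 (by omega)) (fun i hi => hb _ (by omega))
    refine ⟨fun | 0 => u₀ | i + 1 => u i, fun | 0 => v₀ | i + 1 => v i, ?_, ?_⟩
    · rintro (_ | i) hi
      · exact ⟨hau, huv, hvb, himage⟩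
      · obtain ⟨hvu, huv', hvb', himage'⟩ := hmem i (by omega)
        exact ⟨hau.trans (huv.trans hvu), huv', hvb', himage'⟩
    · rintro (_ | i) hi
      · exact (hmem 0 (by omega)).1
      · exact hchain i (by omega)

end Pullback

lemma le_of_lt_of_interlaced {β : Type*} [Preorder β] {u v : ℕ → β} {k : ℕ}
    (huv : ∀ i ≤ k, u i ≤ v i) (hvu : ∀ i < k, v i ≤ u (i + 1)) {i j : ℕ} (hij : i < j)
    (hjk : j ≤ k) : v i ≤ u j := by
  induction j, hij using Nat.le_induction with
  | base => exact hvu i hjk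
  | succ j hij ih => exact (ih (by omega)).trans ((huv j (by omega)).trans (hvu j (by omega)))

lemma interior_Icc_inter_interior_Icc_eq_empty {α : Type*} [LinearOrder α] [TopologicalSpace α]
    [OrderTopology α] [DenselyOrdered α] [NoMinOrder α] [NoMaxOrder α] {a b c d : α}
    (h : b ≤ c) : interior (Icc a b) ∩ interior (Icc c d) = ∅ := by
  rw [interior_Icc, interior_Icc]
  exact eq_empty_iff_forall_notMem.2 fun x hx => (hx.1.2.trans_le h).not_gt hx.2.1

theorem stmt0_general (f : ℝ → ℝ) (a b c d : ℝ) (k : ℕ) (p q : ℕ → ℝ)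
    (hf : ContinuousOn f (Icc 0 1))
    (hab : a ≤ b)
    (habsub : Icc a b ⊆ Icc 0 1)
    (hI : ∀ i ≤ k, p i ≤ q i ∧ Icc (p i) (q i) ⊆ Icc c d)
    (horder : ∀ i, i < k → ∀ x ∈ Icc (p i) (q i), ∀ y ∈ Icc (p (i+1)) (q (i+1)), x ≤ y)
    (hfa : f a ≤ c) (hfb : d ≤ f b) :
    ∃ u v : ℕ → ℝ,
      (∀ i ≤ k, u i ≤ v i ∧ Icc (u i) (v i) ⊆ Icc a b ∧
        f '' Icc (u i) (v i) = Icc (p i) (q i)) ∧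
      (∀ i ≤ k, ∀ j ≤ k, i ≠ j →
        interior (Icc (u i) (v i)) ∩ interior (Icc (u j) (v j)) = ∅) ∧
      (∀ i, i < k → ∀ x ∈ Icc (u i) (v i), ∀ y ∈ Icc (u (i+1)) (v (i+1)), x ≤ y) := by
  have hleft (i) (hi : i ≤ k) : p i ∈ Icc (p i) (q i) := left_mem_Icc.2 (hI i hi).1
  have hright (i) (hi : i ≤ k) : q i ∈ Icc (p i) (q i) := right_mem_Icc.2 (hI i hi).1
  obtain ⟨u, v, hmem, hchain⟩ := exists_chain_image_Icc_eq_Icc hab (hf.mono habsub)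
    (fun i hi => (hI i hi).1) (fun i hi => horder i hi _ (hright i hi.le) _ (hleft (i + 1) hi))
    (hfa.trans ((hI 0 k.zero_le).2 (hleft 0 k.zero_le)).1)
    (fun i hi => ((hI i hi).2 (hright i hi)).2.trans hfb)
  have hle : ∀ i j, i < j → j ≤ k → v i ≤ u j := fun i j =>
    le_of_lt_of_interlaced (fun i hi => (hmem i hi).2.1) hchain
  refine ⟨u, v, fun i hi => ?_, fun i hi j hj hij => ?_,
    fun i hi x hx y hy => hx.2.trans ((hchain i hi).trans hy.1)⟩
  · obtain ⟨hau, huv, hvb, himage⟩ := hmem i hi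
    exact ⟨huv, Icc_subset_Icc hau hvb, himage⟩
  · rcases hij.lt_or_gt with h | h
    · exact interior_Icc_inter_interior_Icc_eq_empty (hle i j h hj)
    · rw [inter_comm]
      exact interior_Icc_inter_interior_Icc_eq_empty (hle j i h hi)

/-- Lemma 1 of the paper, interval version: pulling back an ordered family of
subintervals of `[c,d]` with pairwise disjoint interiors to an ordered family of
subintervals of `[a,b]` with pairwise disjoint interiors mapping exactly onto them. -/
theorem stmt0 (f : ℝ → ℝ) (a b c d : ℝ) (k : ℕ) (p q : ℕ → ℝ)
    (hf : ContinuousOn f (Icc 0 1)) (hmaps : MapsTo f (Icc 0 1) (Icc 0 1))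
    (hab : a ≤ b) (hcd : c ≤ d)
    (habsub : Icc a b ⊆ Icc 0 1) (hcdsub : Icc c d ⊆ Icc 0 1)
    (hcover : Icc c d ⊆ f '' Icc a b)
    (hI : ∀ i ≤ k, p i ≤ q i ∧ Icc (p i) (q i) ⊆ Icc c d)
    (hdisj : ∀ i ≤ k, ∀ j ≤ k, i ≠ j →
      interior (Icc (p i) (q i)) ∩ interior (Icc (p j) (q j)) = ∅)
    (horder : ∀ i, i < k → ∀ x ∈ Icc (p i) (q i), ∀ y ∈ Icc (p (i+1)) (q (i+1)), x ≤ y)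
    (hfa : f a ≤ c) (hfb : d ≤ f b) :
    ∃ u v : ℕ → ℝ,
      (∀ i ≤ k, u i ≤ v i ∧ Icc (u i) (v i) ⊆ Icc a b ∧
        f '' Icc (u i) (v i) = Icc (p i) (q i)) ∧
      (∀ i ≤ k, ∀ j ≤ k, i ≠ j →
        interior (Icc (u i) (v i)) ∩ interior (Icc (u j) (v j)) = ∅) ∧
      (∀ i, i < k → ∀ x ∈ Icc (u i) (v i), ∀ y ∈ Icc (u (i+1)) (v (i+1)), x ≤ y) :=
  stmt0_general f a b c d k p q hf hab habsub hI horder hfa hfb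
end

section
/- Let g : [0,1] → [0,1] be continuous and let L_0, L_1, …, L_M be closed subintervals of [0,1] with pairwise disjoint interiors, ordered from left to right, such that g restricted to each L_i is such that the images g(L_0), …, g(L_M) are closed intervals with pairwise disjoint interiors, also ordered from left to right, whose union is all of [0,1]. Then there exists an index i and a point z ∈ L_i with g(z) = z. -/
/-!
Suppose `g` has no fixed point on any `L i`. By the intermediate value theorem `g - id` then has
constant sign on each `L i`, and induction shows it is negative on all of them: on `L 0` some
point is sent to `min g(L 0) = 0`, and a point of `L (i+1)` sent to `min g(L (i+1)) = max g(L i)`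
lies to the right of a point of `L i` with that image, which `g` moves to the left. But some point
of `L M` is sent to `max g(L M) = 1`, and that point cannot move to the left.
-/

open Set

section IntervalChain

variable {α : Type*} [LinearOrder α] {M : ℕ} {U V : ℕ → α}

theorem right_le_left_succ (hUV : ∀ i ≤ M, U i ≤ V i)
    (hord : ∀ i, i < M → ∀ x ∈ Icc (U i) (V i), ∀ y ∈ Icc (U (i+1)) (V (i+1)), x ≤ y)
    {i : ℕ} (hi : i < M) : V i ≤ U (i + 1) :=
  hord i hi _ (right_mem_Icc.2 (hUV i hi.le)) _ (left_mem_Icc.2 (hUV (i + 1) hi))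

theorem right_le_left_of_lt (hUV : ∀ i ≤ M, U i ≤ V i)
    (hord : ∀ i, i < M → ∀ x ∈ Icc (U i) (V i), ∀ y ∈ Icc (U (i+1)) (V (i+1)), x ≤ y)
    {i j : ℕ} (hij : i < j) (hj : j ≤ M) : V i ≤ U j := by
  induction j, hij using Nat.le_induction with
  | base => exact right_le_left_succ hUV hord hj
  | succ j hij ih =>
    calc V i ≤ U j := ih (by omega)
      _ ≤ V j := hUV j (by omega)
      _ ≤ U (j + 1) := right_le_left_succ hUV hord hj

theorem left_le_left_of_le (hUV : ∀ i ≤ M, U i ≤ V i)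
    (hord : ∀ i, i < M → ∀ x ∈ Icc (U i) (V i), ∀ y ∈ Icc (U (i+1)) (V (i+1)), x ≤ y)
    {i j : ℕ} (hij : i ≤ j) (hj : j ≤ M) : U i ≤ U j := by
  rcases hij.eq_or_lt with rfl | hij
  · rfl
  · exact (hUV i (by omega)).trans (right_le_left_of_lt hUV hord hij hj)

theorem right_le_right_of_le (hUV : ∀ i ≤ M, U i ≤ V i)
    (hord : ∀ i, i < M → ∀ x ∈ Icc (U i) (V i), ∀ y ∈ Icc (U (i+1)) (V (i+1)), x ≤ y)
    {i j : ℕ} (hij : i ≤ j) (hj : j ≤ M) : V i ≤ V j := by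
  rcases hij.eq_or_lt with rfl | hij
  · rfl
  · exact (right_le_left_of_lt hUV hord hij hj).trans (hUV j hj)

theorem left_zero_le_of_iUnion_eq_univ (hUV : ∀ i ≤ M, U i ≤ V i)
    (hord : ∀ i, i < M → ∀ x ∈ Icc (U i) (V i), ∀ y ∈ Icc (U (i+1)) (V (i+1)), x ≤ y)
    (hcover : ⋃ i ∈ Iic M, Icc (U i) (V i) = univ) (t : α) : U 0 ≤ t := by
  obtain ⟨j, hj, ht⟩ := mem_iUnion₂.1 (hcover.symm ▸ mem_univ t)
  exact (left_le_left_of_le hUV hord j.zero_le hj).trans ht.1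

theorem le_right_of_iUnion_eq_univ (hUV : ∀ i ≤ M, U i ≤ V i)
    (hord : ∀ i, i < M → ∀ x ∈ Icc (U i) (V i), ∀ y ∈ Icc (U (i+1)) (V (i+1)), x ≤ y)
    (hcover : ⋃ i ∈ Iic M, Icc (U i) (V i) = univ) (t : α) : t ≤ V M := by
  obtain ⟨j, hj, ht⟩ := mem_iUnion₂.1 (hcover.symm ▸ mem_univ t)
  exact ht.2.trans (right_le_right_of_le hUV hord hj le_rfl)

theorem left_succ_le_right_of_iUnion_eq_univ [DenselyOrdered α] (hUV : ∀ i ≤ M, U i ≤ V i)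
    (hord : ∀ i, i < M → ∀ x ∈ Icc (U i) (V i), ∀ y ∈ Icc (U (i+1)) (V (i+1)), x ≤ y)
    (hcover : ⋃ i ∈ Iic M, Icc (U i) (V i) = univ) {i : ℕ} (hi : i < M) : U (i + 1) ≤ V i := by
  by_contra! hgap
  obtain ⟨t, hVt, htU⟩ := exists_between hgap
  obtain ⟨j, hj, ht⟩ := mem_iUnion₂.1 (hcover.symm ▸ mem_univ t)
  rcases le_or_gt j i with hji | hij
  · exact hVt.not_ge (ht.2.trans (right_le_right_of_le hUV hord hji hi.le))
  · exact htU.not_ge ((left_le_left_of_le hUV hord hij hj).trans ht.1)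

end IntervalChain

theorem apply_lt_self_of_apply_le_self {α : Type*} [ConditionallyCompleteLinearOrder α]
    [DenselyOrdered α] [TopologicalSpace α] [OrderTopology α] {g : α → α} {a b x y : α}
    (hg : ContinuousOn g (Icc a b)) (hfix : ∀ z ∈ Icc a b, g z ≠ z)
    (hx : x ∈ Icc a b) (hy : y ∈ Icc a b) (hgx : g x ≤ x) : g y < y := by
  by_contra! hgy
  obtain ⟨z, hz, hgz⟩ :=
    isPreconnected_Icc.intermediate_value₂ hx hy hg continuousOn_id hgx hgy
  exact hfix z hz hgz

theorem stmt1_general (g : unitInterval → unitInterval) (hg : Continuous g) (M : ℕ)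
    (u v U V : ℕ → unitInterval)
    (hL : ∀ i ≤ M, u i ≤ v i)
    (horder : ∀ i, i < M → ∀ x ∈ Icc (u i) (v i), ∀ y ∈ Icc (u (i+1)) (v (i+1)), x ≤ y)
    (himg : ∀ i ≤ M, g '' Icc (u i) (v i) = Icc (U i) (V i))
    (himgorder : ∀ i, i < M → ∀ x ∈ Icc (U i) (V i), ∀ y ∈ Icc (U (i+1)) (V (i+1)), x ≤ y)
    (hcover : ⋃ i ∈ Iic M, Icc (U i) (V i) = univ) :
    ∃ i ≤ M, ∃ z ∈ Icc (u i) (v i), g z = z := by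
  by_contra! hfix
  have hUV : ∀ i ≤ M, U i ≤ V i := fun i hi =>
    nonempty_Icc.1 (himg i hi ▸ (nonempty_Icc.2 (hL i hi)).image g)
  have hpre : ∀ i ≤ M, ∀ t ∈ Icc (U i) (V i), ∃ a ∈ Icc (u i) (v i), g a = t := by
    intro i hi t ht
    rwa [← himg i hi] at ht
  have hlt : ∀ i ≤ M, ∀ z ∈ Icc (u i) (v i), g z < z := by
    intro i
    induction i with
    | zero =>
      intro hi z hz
      obtain ⟨a, ha, hga⟩ := hpre 0 hi (U 0) (left_mem_Icc.2 (hUV 0 hi))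
      refine apply_lt_self_of_apply_le_self hg.continuousOn (hfix 0 hi) ha hz ?_
      exact hga ▸ left_zero_le_of_iUnion_eq_univ hUV himgorder hcover a
    | succ i ih =>
      intro hi z hz
      obtain ⟨b, hb, hgb⟩ := hpre i (by omega) (V i) (right_mem_Icc.2 (hUV i (by omega)))
      obtain ⟨a, ha, hga⟩ := hpre (i + 1) hi (U (i + 1)) (left_mem_Icc.2 (hUV (i + 1) hi))
      refine apply_lt_self_of_apply_le_self hg.continuousOn (hfix (i + 1) hi) ha hz ?_
      calc g a = U (i + 1) := hga
        _ ≤ V i := left_succ_le_right_of_iUnion_eq_univ hUV himgorder hcover hi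
        _ = g b := hgb.symm
        _ ≤ b := (ih (by omega) b hb).le
        _ ≤ a := horder i hi b hb a ha
  obtain ⟨b, hb, hgb⟩ := hpre M le_rfl (V M) (right_mem_Icc.2 (hUV M le_rfl))
  exact (hlt M le_rfl b hb).not_ge (hgb ▸ le_right_of_iUnion_eq_univ hUV himgorder hcover b)

/-- Step 2 in the proof of Lemma 2: a family of intervals in `[0,1]`, ordered left to
right with pairwise disjoint interiors, whose images under `g` are intervals tiling
`[0,1]` in the same order, forces a fixed point of `g` in one of the intervals. -/
theorem stmt1 (g : unitInterval → unitInterval) (hg : Continuous g) (M : ℕ)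
    (u v U V : ℕ → unitInterval)
    (hL : ∀ i ≤ M, u i ≤ v i)
    (hdisj : ∀ i ≤ M, ∀ j ≤ M, i ≠ j →
      interior (Icc (u i) (v i)) ∩ interior (Icc (u j) (v j)) = ∅)
    (horder : ∀ i, i < M → ∀ x ∈ Icc (u i) (v i), ∀ y ∈ Icc (u (i+1)) (v (i+1)), x ≤ y)
    (himg : ∀ i ≤ M, g '' Icc (u i) (v i) = Icc (U i) (V i))
    (himgdisj : ∀ i ≤ M, ∀ j ≤ M, i ≠ j →
      interior (Icc (U i) (V i)) ∩ interior (Icc (U j) (V j)) = ∅)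
    (himgorder : ∀ i, i < M → ∀ x ∈ Icc (U i) (V i), ∀ y ∈ Icc (U (i+1)) (V (i+1)), x ≤ y)
    (hcover : ⋃ i ∈ Iic M, Icc (U i) (V i) = univ) :
    ∃ i ≤ M, ∃ z ∈ Icc (u i) (v i), g z = z :=
  stmt1_general g hg M u v U V hL horder himg himgorder hcover
end

section
/- Let f : [0,1] → [0,1] be continuous, let J_0 = [c_0,d_0], …, J_k = [c_k,d_k] be closed subintervals, and let 0 = n_0 < n_1 < … < n_{k+1} be integers. Suppose for each 0 ≤ i ≤ k−1 we have f^{n_{i+1}−n_i}(J_i) ⊇ J_{i+1} with f^{n_{i+1}−n_i}(d_i) ∉ (c_{i+1}, d_{i+1}), and also f^{n_{k+1}−n_k}(J_k) ⊇ J_0 with f^{n_{k+1}−n_k}(d_k) ∉ (c_0, d_0). Then there exists z ∈ J_0 such that f^{n_i}(z) ∈ J_i for 0 ≤ i ≤ k and f^{n_{k+1}}(z) = z. -/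
/-!
Each covering `J_{i+1} ⊆ g(J_i)` by a continuous map of a closed interval can be made exact:
some subinterval of `J_i` is mapped by `g` onto `J_{i+1}` (take the last preimage of one endpoint
and then the first preimage of the other one after it). Pulling the intervals back one covering at
a time yields a closed interval `I ⊆ J_0` whose points follow the itinerary and with
`f^{n_k}(I) = J_k`; the last covering then gives `I ⊆ J_0 ⊆ f^{n_{k+1}}(I)`, and a continuous map
whose image of a closed interval contains it has a fixed point there.
-/

open Set

section Covering

variable {α β : Type*} [ConditionallyCompleteLinearOrder α] [TopologicalSpace α] [OrderTopology α]
  [DenselyOrdered α] [LinearOrder β] [TopologicalSpace β] [OrderClosedTopology β]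

theorem exists_Icc_subset_image_eq_Icc_of_le {g : α → β} {p q : α} {c d : β} (hpq : p ≤ q)
    (hg : ContinuousOn g (Icc p q)) (hcd : c ≤ d) (hp : g p = c) (hq : g q = d) :
    ∃ a b, Icc a b ⊆ Icc p q ∧ g '' Icc a b = Icc c d := by
  obtain ⟨a, ⟨⟨hpa, haq⟩, hga : g a = c⟩, ha_max⟩ : ∃ a, IsGreatest (Icc p q ∩ g ⁻¹' {c}) a :=
    (isCompact_Icc.of_isClosed_subset
      (hg.preimage_isClosed_of_isClosed isClosed_Icc isClosed_singleton)
      inter_subset_left).exists_isGreatest ⟨p, ⟨le_rfl, hpq⟩, hp⟩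
  have hgaq : ContinuousOn g (Icc a q) := hg.mono (Icc_subset_Icc_left hpa)
  obtain ⟨b, ⟨⟨hab, hbq⟩, hgb : g b = d⟩, hb_min⟩ : ∃ b, IsLeast (Icc a q ∩ g ⁻¹' {d}) b :=
    (isCompact_Icc.of_isClosed_subset
      (hgaq.preimage_isClosed_of_isClosed isClosed_Icc isClosed_singleton)
      inter_subset_left).exists_isLeast ⟨q, ⟨haq, le_rfl⟩, hq⟩
  have hgab : ContinuousOn g (Icc a b) := hgaq.mono (Icc_subset_Icc_right hbq)
  refine ⟨a, b, Icc_subset_Icc hpa hbq, Subset.antisymm ?_ ?_⟩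
  · rintro _ ⟨x, ⟨hax, hxb⟩, rfl⟩
    constructor
    · by_contra! hlt
      obtain ⟨y, ⟨hxy, hyb⟩, hgy⟩ :=
        intermediate_value_Icc hxb (hgab.mono (Icc_subset_Icc_left hax)) ⟨hlt.le, hgb ▸ hcd⟩
      have hya : y ≤ a := ha_max ⟨⟨hpa.trans (hax.trans hxy), hyb.trans hbq⟩, hgy⟩
      exact hlt.ne (le_antisymm (hxy.trans hya) hax ▸ hga)
    · by_contra! hlt
      obtain ⟨y, ⟨hay, hyx⟩, hgy⟩ :=
        intermediate_value_Icc hax (hgab.mono (Icc_subset_Icc_right hxb)) ⟨hga ▸ hcd, hlt.le⟩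
      have hby : b ≤ y := hb_min ⟨⟨hay, (hyx.trans hxb).trans hbq⟩, hgy⟩
      exact hlt.ne' (le_antisymm hxb (hby.trans hyx) ▸ hgb)
  · exact hga ▸ hgb ▸ intermediate_value_Icc hab hgab

open OrderDual in
theorem exists_Icc_subset_image_eq_Icc_of_surjOn {g : α → β} {a b : α} {c d : β}
    (hg : ContinuousOn g (Icc a b)) (hcd : c ≤ d) (h : SurjOn g (Icc a b) (Icc c d)) :
    ∃ a' b', Icc a' b' ⊆ Icc a b ∧ g '' Icc a' b' = Icc c d := by
  obtain ⟨u, hu, hgu⟩ := h (left_mem_Icc.2 hcd)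
  obtain ⟨v, hv, hgv⟩ := h (right_mem_Icc.2 hcd)
  rcases le_total u v with huv | hvu
  · obtain ⟨a', b', hsub, himg⟩ := exists_Icc_subset_image_eq_Icc_of_le huv
      (hg.mono (Icc_subset_Icc hu.1 hv.2)) hcd hgu hgv
    exact ⟨a', b', hsub.trans (Icc_subset_Icc hu.1 hv.2), himg⟩
  · have hg' : ContinuousOn (g ∘ ofDual) (Icc (toDual u) (toDual v)) := by
      rw [Icc_toDual]
      exact (hg.mono (Icc_subset_Icc hv.1 hu.2)).comp continuous_ofDual.continuousOn
        (mapsTo_preimage _ _)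
    obtain ⟨a', b', hsub, himg⟩ := exists_Icc_subset_image_eq_Icc_of_le (α := αᵒᵈ)
      (toDual_le_toDual.2 hvu) hg' hcd hgu hgv
    refine ⟨ofDual b', ofDual a', ?_, ?_⟩
    · rw [Icc_ofDual]
      exact fun x hx => Icc_subset_Icc hv.1 hu.2 ⟨(hsub hx).2, (hsub hx).1⟩
    · rw [← himg, image_comp, Icc_ofDual, ofDual.image_eq_preimage_symm]
      rfl

end Covering

theorem surjOn_iterate_of_le {α : Type*} {f : α → α} {p q : ℕ} {s t u : Set α} (hpq : p ≤ q)
    (hst : SurjOn f^[p] s t) (htu : SurjOn f^[q - p] t u) : SurjOn f^[q] s u := by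
  rw [← Nat.sub_add_cancel hpq, Function.iterate_add]
  exact htu.comp hst

section Itinerary

variable {α : Type*} [ConditionallyCompleteLinearOrder α] [TopologicalSpace α] [OrderTopology α]
  [DenselyOrdered α]

theorem exists_Icc_itinerary_of_surjOn {f : α → α} (hf : Continuous f) {c d : ℕ → α}
    {n : ℕ → ℕ} (hn0 : n 0 = 0) (m : ℕ) (hn : ∀ i < m, n i ≤ n (i + 1))
    (hcd : ∀ i ≤ m, c i ≤ d i)
    (hcov : ∀ i < m, SurjOn f^[n (i + 1) - n i] (Icc (c i) (d i)) (Icc (c (i + 1)) (d (i + 1)))) :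
    ∃ a b, (∀ i ≤ m, MapsTo f^[n i] (Icc a b) (Icc (c i) (d i))) ∧
      f^[n m] '' Icc a b = Icc (c m) (d m) := by
  induction m with
  | zero =>
    refine ⟨c 0, d 0, fun i hi => ?_, by rw [hn0, Function.iterate_zero, image_id]⟩
    rw [Nat.le_zero.1 hi, hn0, Function.iterate_zero]
    exact mapsTo_id _
  | succ m ih =>
    obtain ⟨a, b, hmaps, himg⟩ := ih (fun i hi => hn i (by omega)) (fun i hi => hcd i (by omega))
      (fun i hi => hcov i (by omega))
    have hsurj : SurjOn f^[n (m + 1)] (Icc a b) (Icc (c (m + 1)) (d (m + 1))) :=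
      surjOn_iterate_of_le (hn m m.lt_succ_self) (himg ▸ surjOn_image _ _) (hcov m m.lt_succ_self)
    obtain ⟨a', b', hsub, himg'⟩ := exists_Icc_subset_image_eq_Icc_of_surjOn
      (hf.iterate _).continuousOn (hcd (m + 1) le_rfl) hsurj
    refine ⟨a', b', fun i hi => ?_, himg'⟩
    rcases Nat.lt_or_eq_of_le hi with hi | rfl
    · exact (hmaps i (Nat.lt_succ_iff.1 hi)).mono_left hsub
    · exact himg' ▸ mapsTo_image _ _

end Itinerary

theorem stmt3_general (f : unitInterval → unitInterval) (hf : Continuous f)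
    (k : ℕ) (c d : ℕ → unitInterval) (n : ℕ → ℕ)
    (hn0 : n 0 = 0) (hmono : ∀ i ≤ k, n i < n (i + 1))
    (hcd : ∀ i ≤ k, c i ≤ d i)
    (hcov : ∀ i < k,
      Icc (c (i+1)) (d (i+1)) ⊆ f^[n (i+1) - n i] '' Icc (c i) (d i))
    (hcovk : Icc (c 0) (d 0) ⊆ f^[n (k+1) - n k] '' Icc (c k) (d k)) :
    ∃ z ∈ Icc (c 0) (d 0), (∀ i ≤ k, f^[n i] z ∈ Icc (c i) (d i)) ∧
      f^[n (k+1)] z = z := by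
  obtain ⟨a, b, hmaps, himg⟩ :=
    exists_Icc_itinerary_of_surjOn hf hn0 k (fun i hi => (hmono i hi.le).le) hcd hcov
  have hab : a ≤ b :=
    nonempty_Icc.1 (((nonempty_Icc.2 (hcd k le_rfl)).mono himg.ge).of_image)
  have hsub : Icc a b ⊆ Icc (c 0) (d 0) := by
    simpa [hn0, mapsTo_iff_subset_preimage] using hmaps 0 k.zero_le
  have hsurj : SurjOn f^[n (k + 1)] (Icc a b) (Icc a b) :=
    (surjOn_iterate_of_le (hmono k le_rfl).le (himg ▸ surjOn_image _ _) hcovk).mono le_rfl hsub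
  obtain ⟨z, hz, hfix⟩ := exists_mem_Icc_isFixedPt_of_surjOn (hf.iterate _).continuousOn hab hsurj
  exact ⟨z, hsub hz, fun i hi => hmaps i hi hz, hfix⟩

/-- The interval version of Lemma 2 of the paper: an itinerary of covering relations
along intervals `J_i` at times `n_i`, with the endpoint condition, produces a point
following the intervals which is periodic of period `n_{k+1}`. -/
theorem stmt3 (f : unitInterval → unitInterval) (hf : Continuous f)
    (k : ℕ) (c d : ℕ → unitInterval) (n : ℕ → ℕ)
    (hn0 : n 0 = 0) (hmono : ∀ i ≤ k, n i < n (i + 1))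
    (hcd : ∀ i ≤ k, c i ≤ d i)
    (hcov : ∀ i < k,
      Icc (c (i+1)) (d (i+1)) ⊆ f^[n (i+1) - n i] '' Icc (c i) (d i))
    (hend : ∀ i < k, f^[n (i+1) - n i] (d i) ∉ Ioo (c (i+1)) (d (i+1)))
    (hcovk : Icc (c 0) (d 0) ⊆ f^[n (k+1) - n k] '' Icc (c k) (d k))
    (hendk : f^[n (k+1) - n k] (d k) ∉ Ioo (c 0) (d 0)) :
    ∃ z ∈ Icc (c 0) (d 0), (∀ i ≤ k, f^[n i] z ∈ Icc (c i) (d i)) ∧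
      f^[n (k+1)] z = z :=
  stmt3_general f hf k c d n hn0 hmono hcd hcov hcovk
end

section
/- Let X be a compact metric space homeomorphic to a finite tree, let Y ⊆ X be a closed connected subset (a subtree), and let f : Y → X be continuous such that for every a ∈ Y the half-open arc (a, f(a)] intersects Y (where [a, f(a)] denotes the unique arc in X from a to f(a)). Then f has a fixed point in Y. -/
/-!
Fix `a ∈ Y` and order `Y` by betweenness from `a`: `y ≤ y'` iff `y ∈ [a, y']`. Betweenness is a
closed relation, so the compact set of `y ∈ Y` with `y ∈ [a, f y]` has a maximal element `z`.
If `f z ≠ z`, the hypothesis gives `w ∈ (z, f z] ∩ Y`; points `z' ≠ z` of `[z, w]` close to `z`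
lie in `Y` beyond `z`, and `f z'` stays in a small connected neighbourhood of `f z`, which forces
`z' ∈ [a, f z']`, contradicting maximality.

The topological input is that in a tree the arc joining two points of a connected set lies in
that set. It rests on the finiteness of the vertex set: if no point of `[a, b]` separated `a`
from `b`, every non-vertex point `s` of the arc would have a second complementary component, which
contains a vertex (a non-cut point of its closure), and distinct `s` would give distinct vertices.
-/

open Set Topology Function

/-- An arc in `X` from `a` to `b` (possibly degenerate), given as its image `A`. -/
def IsArcConn {X : Type*} [TopologicalSpace X] (A : Set X) (a b : X) : Prop :=
  (a = b ∧ A = {a}) ∨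
  ∃ f : ℝ → X, ContinuousOn f (Set.Icc 0 1) ∧ Set.InjOn f (Set.Icc 0 1) ∧
    f 0 = a ∧ f 1 = b ∧ f '' Set.Icc 0 1 = A

/-- The number of connected components of a subset. -/
noncomputable def numComponents {X : Type*} [TopologicalSpace X] (S : Set X) : ℕ :=
  Nat.card (ConnectedComponents S)

/-- A (finite topological) tree: a compact, connected, locally connected Hausdorff
space which is uniquely arcwise connected and has finitely many points of order ≠ 2. -/
class IsTree (X : Type*) [TopologicalSpace X] : Prop where
  t2 : T2Space X
  compact : CompactSpace X
  conn : ConnectedSpace X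
  locConn : LocallyConnectedSpace X
  arc_exists : ∀ a b : X, ∃ A : Set X, IsArcConn A a b
  arc_unique : ∀ (a b : X) (A B : Set X), IsArcConn A a b → IsArcConn B a b → A = B
  finite_vertices : {x : X | numComponents ({x}ᶜ : Set X) ≠ 2}.Finite

/-- The number of endpoints of a tree: points whose complement is connected
(i.e. has one connected component). -/
noncomputable def Ends (X : Type*) [TopologicalSpace X] : ℕ :=
  Set.ncard {x : X | numComponents ({x}ᶜ : Set X) = 1}

/-- The number of edges of a tree: the number of connected components of the
complement of the set of vertices (points of order ≠ 2). -/
noncomputable def Edg (X : Type*) [TopologicalSpace X] : ℕ :=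
  numComponents ({x : X | numComponents ({x}ᶜ : Set X) ≠ 2}ᶜ : Set X)

/-- The topological entropy of a self-map. -/
noncomputable def topEnt {X : Type*} [UniformSpace X] (f : X → X) : EReal :=
  Dynamics.coverEntropy f Set.univ

section Reparametrization

variable {X : Type*} [TopologicalSpace X]

lemma isArcConn_of_reparam {γ : ℝ → X} (hc : ContinuousOn γ (Icc 0 1))
    (hi : InjOn γ (Icc 0 1)) {φ : ℝ → ℝ} (hφ : Continuous φ) (hφi : Injective φ) {s t : ℝ}
    (hφs : φ '' Icc 0 1 = Icc s t) (hs : 0 ≤ s) (ht : t ≤ 1) :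
    IsArcConn (γ '' Icc s t) (γ (φ 0)) (γ (φ 1)) := by
  have hmaps : MapsTo φ (Icc 0 1) (Icc 0 1) := by
    rw [mapsTo_iff_image_subset, hφs]; exact Icc_subset_Icc hs ht
  refine Or.inr ⟨γ ∘ φ, hc.comp hφ.continuousOn hmaps, hi.comp hφi.injOn hmaps, rfl, rfl, ?_⟩
  rw [image_comp, hφs]

lemma IsArcConn.symm {A : Set X} {a b : X} (h : IsArcConn A a b) : IsArcConn A b a := by
  rcases h with ⟨rfl, rfl⟩ | ⟨γ, hc, hi, rfl, rfl, rfl⟩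
  · exact Or.inl ⟨rfl, rfl⟩
  · simpa using isArcConn_of_reparam hc hi (φ := fun u => 1 - u) (by fun_prop)
      (sub_right_injective) (by simp) le_rfl le_rfl

lemma isArcConn_image_Icc {γ : ℝ → X} (hc : ContinuousOn γ (Icc 0 1))
    (hi : InjOn γ (Icc 0 1)) {s t : ℝ} (hs : 0 ≤ s) (hst : s ≤ t) (ht : t ≤ 1) :
    IsArcConn (γ '' Icc s t) (γ s) (γ t) := by
  rcases hst.eq_or_lt with rfl | hlt
  · exact Or.inl ⟨rfl, by simp⟩
  · simpa using isArcConn_of_reparam hc hi (φ := fun u => (t - s) * u + s) (by fun_prop)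
      (fun u v h => by simpa [(sub_pos.2 hlt).ne'] using h)
      (by simp [image_affine_Icc' (sub_pos.2 hlt)]) hs ht

end Reparametrization

namespace IsTree

variable {X : Type*} [TopologicalSpace X] [IsTree X]

instance (priority := 100) toT2Space : T2Space X := t2
instance (priority := 100) toCompactSpace : CompactSpace X := compact
instance (priority := 100) toConnectedSpace : ConnectedSpace X := conn
instance (priority := 100) toLocallyConnectedSpace : LocallyConnectedSpace X := locConn

end IsTree

section Arc

variable {X : Type*} [TopologicalSpace X] [IsTree X]

/-- The arc `[a, b]` of the paper. -/
noncomputable def arc (a b : X) : Set X := (IsTree.arc_exists a b).choose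

lemma isArcConn_arc (a b : X) : IsArcConn (arc a b) a b := (IsTree.arc_exists a b).choose_spec

lemma IsArcConn.eq_arc {A : Set X} {a b : X} (h : IsArcConn A a b) : A = arc a b :=
  IsTree.arc_unique a b A (arc a b) h (isArcConn_arc a b)

@[simp] lemma arc_self (a : X) : arc a a = {a} := (IsArcConn.eq_arc (Or.inl ⟨rfl, rfl⟩)).symm

lemma arc_comm (a b : X) : arc a b = arc b a := (isArcConn_arc a b).symm.eq_arc

lemma exists_param_arc {a b : X} (h : a ≠ b) :
    ∃ γ : ℝ → X, ContinuousOn γ (Icc 0 1) ∧ InjOn γ (Icc 0 1) ∧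
      γ 0 = a ∧ γ 1 = b ∧ γ '' Icc 0 1 = arc a b := by
  rcases isArcConn_arc a b with ⟨hab, -⟩ | hγ
  exacts [absurd hab h, hγ]

lemma image_Icc_eq_arc {γ : ℝ → X} (hc : ContinuousOn γ (Icc 0 1)) (hi : InjOn γ (Icc 0 1))
    {s t : ℝ} (hs : 0 ≤ s) (hst : s ≤ t) (ht : t ≤ 1) : γ '' Icc s t = arc (γ s) (γ t) :=
  (isArcConn_image_Icc hc hi hs hst ht).eq_arc

lemma left_mem_arc (a b : X) : a ∈ arc a b := by
  rcases eq_or_ne a b with rfl | h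
  · simp
  · obtain ⟨γ, -, -, rfl, -, himg⟩ := exists_param_arc h
    exact himg ▸ mem_image_of_mem γ (left_mem_Icc.2 zero_le_one)

lemma right_mem_arc (a b : X) : b ∈ arc a b := arc_comm a b ▸ left_mem_arc b a

lemma isCompact_arc (a b : X) : IsCompact (arc a b) := by
  rcases eq_or_ne a b with rfl | h
  · simp
  · obtain ⟨γ, hc, -, -, -, himg⟩ := exists_param_arc h
    exact himg ▸ isCompact_Icc.image_of_continuousOn hc

lemma isClosed_arc (a b : X) : IsClosed (arc a b) := (isCompact_arc a b).isClosed

lemma isPreconnected_arc (a b : X) : IsPreconnected (arc a b) := by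
  rcases eq_or_ne a b with rfl | h
  · simpa using isPreconnected_singleton
  · obtain ⟨γ, hc, -, -, -, himg⟩ := exists_param_arc h
    exact himg ▸ isPreconnected_Icc.image γ hc

lemma arc_infinite {a b : X} (h : a ≠ b) : (arc a b).Infinite := by
  obtain ⟨γ, -, hi, -, -, himg⟩ := exists_param_arc h
  exact himg ▸ (Icc_infinite zero_lt_one).image hi

lemma exists_param_split {a b c : X} (hab : a ≠ b) (hc : c ∈ arc a b) :
    ∃ γ : ℝ → X, InjOn γ (Icc 0 1) ∧ ∃ r ∈ Icc (0 : ℝ) 1, γ r = c ∧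
      arc a c = γ '' Icc 0 r ∧ arc c b = γ '' Icc r 1 ∧ arc a b = γ '' Icc 0 1 := by
  obtain ⟨γ, hγc, hγi, rfl, rfl, himg⟩ := exists_param_arc hab
  obtain ⟨r, hr, rfl⟩ := himg ▸ hc
  exact ⟨γ, hγi, r, hr, rfl, (image_Icc_eq_arc hγc hγi le_rfl hr.1 hr.2).symm,
    (image_Icc_eq_arc hγc hγi hr.1 hr.2 le_rfl).symm, himg.symm⟩

lemma arc_union_arc_of_mem {a b c : X} (hc : c ∈ arc a b) : arc a c ∪ arc c b = arc a b := by
  rcases eq_or_ne a b with rfl | hab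
  · obtain rfl : c = a := by simpa using hc
    simp
  · obtain ⟨γ, -, r, hr, -, h₁, h₂, h⟩ := exists_param_split hab hc
    rw [h₁, h₂, h, ← image_union, Icc_union_Icc_eq_Icc hr.1 hr.2]

lemma arc_inter_arc_of_mem {a b c : X} (hc : c ∈ arc a b) : arc a c ∩ arc c b = {c} := by
  rcases eq_or_ne a b with rfl | hab
  · obtain rfl : c = a := by simpa using hc
    simp
  · obtain ⟨γ, hγi, r, hr, rfl, h₁, h₂, -⟩ := exists_param_split hab hc
    rw [h₁, h₂, ← hγi.image_inter (Icc_subset_Icc le_rfl hr.2) (Icc_subset_Icc hr.1 le_rfl),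
      Icc_inter_Icc_eq_singleton hr.1 hr.2, image_singleton]

lemma arc_subset_arc_left {a b c : X} (hc : c ∈ arc a b) : arc a c ⊆ arc a b :=
  arc_union_arc_of_mem hc ▸ subset_union_left

lemma arc_subset_arc_right {a b c : X} (hc : c ∈ arc a b) : arc c b ⊆ arc a b :=
  arc_union_arc_of_mem hc ▸ subset_union_right

lemma eq_of_mem_arc_of_mem_arc {a b c : X} (hc : c ∈ arc a b) (hb : b ∈ arc a c) : b = c := by
  have h : b ∈ arc a c ∩ arc c b := ⟨hb, right_mem_arc c b⟩
  rwa [arc_inter_arc_of_mem hc] at h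

lemma exists_mem_arc_ne_of_mem_nhds {a b : X} (hab : a ≠ b) {O : Set X} (hO : O ∈ 𝓝 b) :
    ∃ z ∈ arc a b ∩ O, z ≠ b := by
  obtain ⟨γ, hc, hi, -, rfl, himg⟩ := exists_param_arc hab
  have hmem : γ ⁻¹' O ∈ 𝓝[Icc 0 1] (1 : ℝ) := hc 1 (right_mem_Icc.2 zero_le_one) hO
  rw [nhdsWithin_Icc_eq_nhdsLE zero_lt_one] at hmem
  obtain ⟨t, htO, ht⟩ := Filter.nonempty_of_mem <|
    Filter.inter_mem (nhdsWithin_mono _ Iio_subset_Iic_self hmem) (Ioo_mem_nhdsLT zero_lt_one)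
  refine ⟨γ t, ⟨himg ▸ mem_image_of_mem γ (Ioo_subset_Icc_self ht), htO⟩, fun h => ?_⟩
  exact ht.2.ne (hi (Ioo_subset_Icc_self ht) (right_mem_Icc.2 zero_le_one) h)

end Arc

theorem exists_maximal_of_isCompact_upper {X : Type*} [TopologicalSpace X] [T2Space X]
    {S : Set X} (hS : S.Nonempty) (r : X → X → Prop) (hrefl : ∀ x ∈ S, r x x)
    (htrans : ∀ x ∈ S, ∀ y ∈ S, ∀ z ∈ S, r x y → r y z → r x z)
    (hcpt : ∀ x ∈ S, IsCompact {y ∈ S | r x y}) :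
    ∃ z ∈ S, ∀ y ∈ S, r z y → r y z := by
  have : Nonempty S := hS.to_subtype
  have hchain (c : Set S) (hc : IsChain (fun x y : S => r x y) c) (hne : c.Nonempty) :
      ∃ u : S, ∀ x ∈ c, r x u := by
    obtain ⟨x₀, hx₀⟩ := hne
    have : Nonempty c := ⟨⟨x₀, hx₀⟩⟩
    have hdir : Directed (· ⊇ ·) fun x : c => {y ∈ S | r x y} := by
      rintro ⟨x, hx⟩ ⟨y, hy⟩
      rcases eq_or_ne x y with rfl | hne
      · exact ⟨⟨x, hx⟩, le_rfl, le_rfl⟩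
      rcases hc hx hy hne with hxy | hyx
      · exact ⟨⟨y, hy⟩, fun w hw => ⟨hw.1, htrans x x.2 y y.2 w hw.1 hxy hw.2⟩, le_rfl⟩
      · exact ⟨⟨x, hx⟩, le_rfl, fun w hw => ⟨hw.1, htrans y y.2 x x.2 w hw.1 hyx hw.2⟩⟩
    obtain ⟨u, hu⟩ := IsCompact.nonempty_iInter_of_directed_nonempty_isCompact_isClosed _ hdir
      (fun x => ⟨x.1, x.1.2, hrefl _ x.1.2⟩) (fun x => hcpt _ x.1.2)
      (fun x => (hcpt _ x.1.2).isClosed)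
    exact ⟨⟨u, (mem_iInter.1 hu ⟨x₀, hx₀⟩).1⟩, fun x hx => (mem_iInter.1 hu ⟨x, hx⟩).2⟩
  obtain ⟨z, hz⟩ := exists_maximal_of_nonempty_chains_bounded hchain
    (fun {x y z} => htrans x x.2 y y.2 z z.2)
  exact ⟨z, z.2, fun y hy hzy => hz ⟨y, hy⟩ hzy⟩

section CutPoints

variable {X : Type*} [TopologicalSpace X]

structure SplitsAt (y : X) (A B : Set X) : Prop where
  isOpen_left : IsOpen A
  isOpen_right : IsOpen B
  disjoint : Disjoint A B
  union_eq : A ∪ B = {y}ᶜ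

lemma SplitsAt.symm {y : X} {A B : Set X} (h : SplitsAt y A B) : SplitsAt y B A :=
  ⟨h.isOpen_right, h.isOpen_left, h.disjoint.symm, union_comm A B ▸ h.union_eq⟩

lemma SplitsAt.left_subset {y : X} {A B : Set X} (h : SplitsAt y A B) : A ⊆ {y}ᶜ :=
  h.union_eq ▸ subset_union_left

lemma SplitsAt.right_subset {y : X} {A B : Set X} (h : SplitsAt y A B) : B ⊆ {y}ᶜ :=
  h.symm.left_subset

lemma SplitsAt.mem_right {y x : X} {A B : Set X} (h : SplitsAt y A B) (hx : x ≠ y)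
    (hA : x ∉ A) : x ∈ B :=
  (h.union_eq.symm ▸ hx : x ∈ A ∪ B).resolve_left hA

lemma SplitsAt.isPreconnected_compl [PreconnectedSpace X] {y : X} {A B : Set X}
    (h : SplitsAt y A B) : IsPreconnected Bᶜ := by
  rw [isPreconnected_iff_subset_of_disjoint]
  intro u v hu hv hcov hdisj
  wlog hyu : y ∈ u generalizing u v
  · have hyv : y ∈ v := (hcov (h.right_subset.mt (· rfl))).resolve_left hyu
    exact (this v u hv hu (union_comm u v ▸ hcov) (inter_comm u v ▸ hdisj) hyv).symm
  left
  have huniv : univ ⊆ (B ∪ u) ∪ (A ∩ v) := by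
    intro x _
    by_cases hxB : x ∈ B
    · exact Or.inl (Or.inl hxB)
    rcases hcov hxB with hxu | hxv
    · exact Or.inl (Or.inr hxu)
    by_cases hxy : x = y
    · exact Or.inl (Or.inr (hxy ▸ hyu))
    exact Or.inr ⟨h.symm.mem_right hxy hxB, hxv⟩
  have hdisj' : Disjoint (B ∪ u) (A ∩ v) := by
    rw [disjoint_union_left]
    refine ⟨h.disjoint.symm.mono_right inter_subset_left, disjoint_left.2 fun x hxu hx => ?_⟩
    have hxB : x ∉ B := disjoint_left.1 h.disjoint hx.1
    exact (hdisj ▸ (⟨hxB, hxu, hx.2⟩ : x ∈ Bᶜ ∩ (u ∩ v)) : x ∈ (∅ : Set X))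
  have := isPreconnected_univ.subset_left_of_subset_union (h.isOpen_right.union hu)
    (h.isOpen_left.inter hv) hdisj' huniv ⟨y, trivial, Or.inr hyu⟩
  exact fun x hx => (this (mem_univ x)).resolve_left hx

lemma exists_splitsAt_of_not_isPreconnected [T1Space X] {y s : X} (hsy : s ≠ y)
    (hy : ¬ IsPreconnected ({y}ᶜ : Set X)) : ∃ A B, SplitsAt y A B ∧ A.Nonempty ∧ s ∈ B := by
  simp only [isPreconnected_iff_subset_of_disjoint, not_forall, not_or, exists_prop] at hy
  obtain ⟨u, v, hu, hv, hcov, hdisj, hnu, hnv⟩ := hy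
  have hsplit : SplitsAt y ({y}ᶜ ∩ u) ({y}ᶜ ∩ v) := by
    refine ⟨isOpen_compl_singleton.inter hu, isOpen_compl_singleton.inter hv, ?_, ?_⟩
    · rw [disjoint_iff_inter_eq_empty, ← hdisj]
      ext; simp only [mem_inter_iff]; tauto
    · rw [← inter_union_distrib_left, inter_eq_left.2 hcov]
  have hne {u v : Set X} (hcov : ({y}ᶜ : Set X) ⊆ u ∪ v) (hnv : ¬ {y}ᶜ ⊆ v) :
      ({y}ᶜ ∩ u).Nonempty := by
    obtain ⟨x, hx, hxv⟩ := not_subset.1 hnv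
    exact ⟨x, hx, (hcov hx).resolve_right hxv⟩
  rcases hcov hsy with hsu | hsv
  · exact ⟨_, _, hsplit.symm, hne (union_comm u v ▸ hcov) hnu, hsy, hsu⟩
  · exact ⟨_, _, hsplit, hne hcov hnv, hsy, hsv⟩

lemma SplitsAt.compl_subset [PreconnectedSpace X] {y z s : X} {A B A' B' : Set X}
    (h : SplitsAt y A B) (h' : SplitsAt z A' B') (hz : z ∈ A) (hs : s ∈ B) (hs' : s ∈ B') :
    B'ᶜ ⊆ A := by
  have hsub : Aᶜ ⊆ A' ∪ B' := by
    rw [h'.union_eq]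
    exact fun x hx hxz => hx (hxz ▸ hz)
  have hAB' : Aᶜ ⊆ B' := h.symm.isPreconnected_compl.subset_right_of_subset_union
    h'.isOpen_left h'.isOpen_right h'.disjoint hsub ⟨s, disjoint_right.1 h.disjoint hs, hs'⟩
  exact compl_subset_comm.1 hAB'

theorem exists_ne_isPreconnected_compl_singleton [CompactSpace X] [PreconnectedSpace X]
    [T2Space X] {s t : X} (hts : t ≠ s) : ∃ y ≠ s, IsPreconnected ({y}ᶜ : Set X) := by
  by_contra! hcut
  have hsplit (y : X) (hy : y ≠ s) : ∃ A B, SplitsAt y A B ∧ A.Nonempty ∧ s ∈ B :=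
    exists_splitsAt_of_not_isPreconnected (Ne.symm hy) (hcut y hy)
  choose! A B hAB hA hsB using hsplit
  have hupper (y : X) (hy : y ≠ s) : {z ∈ ({s}ᶜ : Set X) | z ∉ B y} = (B y)ᶜ := by
    ext z
    simp only [mem_ofPred_eq, mem_compl_iff, mem_singleton_iff, and_iff_right_iff_imp]
    rintro hz rfl
    exact hz (hsB y hy)
  have htrans (x : X) (hx : x ≠ s) (y : X) (hy : y ≠ s) (w : X) (hyx : y ∉ B x)
      (hwy : w ∉ B y) : w ∉ B x := by
    rcases eq_or_ne y x with rfl | hne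
    · exact hwy
    have hyA : y ∈ A x := by
      by_contra hyA
      exact hyx ((hAB x hx).mem_right hne hyA)
    exact disjoint_left.1 (hAB x hx).disjoint
      ((hAB x hx).compl_subset (hAB y hy) hyA (hsB x hx) (hsB y hy) hwy)
  obtain ⟨z, hzs, hmax⟩ := exists_maximal_of_isCompact_upper (S := {s}ᶜ) ⟨t, hts⟩
    (fun y z => z ∉ B y) (fun y hy => (hAB y hy).right_subset.mt (· rfl))
    (fun x hx y hy w _ => htrans x hx y hy w)
    (fun y hy => hupper y hy ▸ (hAB y hy).isOpen_right.isClosed_compl.isCompact)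
  obtain ⟨y, hy⟩ := hA z hzs
  have hyB : y ∉ B z := disjoint_left.1 (hAB z hzs).disjoint hy
  have hys : y ≠ s := fun h => hyB (h ▸ hsB z hzs)
  have hzA : z ∈ A y := by
    by_contra hzA
    have hzy : z ≠ y := fun h => (hAB z hzs).left_subset hy (h ▸ rfl)
    exact hmax y hys hyB ((hAB y hys).mem_right hzy hzA)
  exact (hAB y hys).left_subset
    ((hAB y hys).compl_subset (hAB z hzs) hzA (hsB y hys) (hsB z hzs) hyB) rfl

end CutPoints

section Components

variable {X : Type*} [TopologicalSpace X]

lemma numComponents_eq_one {S : Set X} (hne : S.Nonempty) (hS : IsPreconnected S) :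
    numComponents S = 1 := by
  have : PreconnectedSpace S := isPreconnected_iff_preconnectedSpace.1 hS
  have : Nonempty S := hne.to_subtype
  exact Nat.card_unique

lemma exists_notMem_connectedComponentIn {S : Set X} (hS : numComponents S = 2) (x : X) :
    ∃ d ∈ S, d ∉ connectedComponentIn S x := by
  by_contra! h
  have hC : connectedComponentIn S x = S := (connectedComponentIn_subset S x).antisymm h
  have : PreconnectedSpace S :=
    isPreconnected_iff_preconnectedSpace.1 (hC ▸ isPreconnected_connectedComponentIn)
  obtain ⟨p, q, hpq, -⟩ := Nat.card_eq_two_iff.1 hS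
  exact hpq (Subsingleton.elim p q)

lemma closure_connectedComponentIn_inter_subset (F : Set X) (x : X) :
    closure (connectedComponentIn F x) ∩ F ⊆ connectedComponentIn F x := by
  rintro y ⟨hy, hyF⟩
  by_cases hx : x ∈ F
  · have hpre : IsPreconnected (insert y (connectedComponentIn F x)) :=
      isPreconnected_connectedComponentIn.subset_closure (subset_insert _ _)
        (insert_subset hy subset_closure)
    exact hpre.subset_connectedComponentIn (mem_insert_of_mem _ (mem_connectedComponentIn hx))
      (insert_subset hyF (connectedComponentIn_subset F x)) (mem_insert y _)
  · simp [connectedComponentIn_eq_empty hx] at hy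

variable [T1Space X] [PreconnectedSpace X] [LocallyConnectedSpace X]

lemma closure_connectedComponentIn_compl_singleton {s d : X} (hd : d ≠ s) :
    closure (connectedComponentIn {s}ᶜ d) = insert s (connectedComponentIn {s}ᶜ d) := by
  set D := connectedComponentIn {s}ᶜ d
  have hsub (y : X) (hy : y ∈ closure D) (hys : y ≠ s) : y ∈ D :=
    closure_connectedComponentIn_inter_subset _ d ⟨hy, hys⟩
  refine Subset.antisymm (fun y hy => ?_) (insert_subset ?_ subset_closure)
  · rcases eq_or_ne y s with rfl | hys
    exacts [mem_insert y D, mem_insert_of_mem s (hsub y hy hys)]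
  · by_contra hs
    have hclopen : IsClopen D := ⟨closure_subset_iff_isClosed.1 fun y hy =>
      hsub y hy (ne_of_mem_of_not_mem hy hs), isOpen_compl_singleton.connectedComponentIn⟩
    have := hclopen.eq_univ ⟨d, mem_connectedComponentIn hd⟩ ▸ mem_univ s
    exact connectedComponentIn_subset _ _ this rfl

lemma splitsAt_connectedComponentIn {s d : X} (hd : d ≠ s) :
    SplitsAt s (connectedComponentIn {s}ᶜ d) (closure (connectedComponentIn {s}ᶜ d))ᶜ := by
  refine ⟨isOpen_compl_singleton.connectedComponentIn, isClosed_closure.isOpen_compl,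
    disjoint_compl_right.mono_right (compl_subset_compl.2 subset_closure), ?_⟩
  rw [closure_connectedComponentIn_compl_singleton hd]
  ext x
  have := @connectedComponentIn_subset _ _ {s}ᶜ d
  by_cases hxs : x = s <;> by_cases hxD : x ∈ connectedComponentIn {s}ᶜ d <;>
    simp_all [subset_def]

lemma eq_of_mem_connectedComponentIn_compl_singleton {s s' d d' y : X} (hd : d ≠ s)
    (hd' : d' ≠ s') (hy : y ∈ connectedComponentIn {s}ᶜ d) (hy' : y ∈ connectedComponentIn {s'}ᶜ d')
    (hs : s ∉ connectedComponentIn {s'}ᶜ d') (hs' : s' ∉ connectedComponentIn {s}ᶜ d) :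
    s = s' := by
  have hsub {s s' d d' : X} (hy : y ∈ connectedComponentIn {s}ᶜ d)
      (hy' : y ∈ connectedComponentIn {s'}ᶜ d') (hs : s ∉ connectedComponentIn {s'}ᶜ d') :
      connectedComponentIn {s'}ᶜ d' ⊆ connectedComponentIn {s}ᶜ d :=
    connectedComponentIn_eq hy ▸ isPreconnected_connectedComponentIn.subset_connectedComponentIn
      hy' fun x hx hxs => hs (hxs ▸ hx)
  -- The components coincide, and `s`, `s'` are both the one point of its closure outside it.
  have hD := (hsub hy hy' hs).antisymm (hsub hy' hy hs')
  have hcl := closure_connectedComponentIn_compl_singleton hd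
  rw [← hD, closure_connectedComponentIn_compl_singleton hd'] at hcl
  have : s ∈ insert s' (connectedComponentIn {s'}ᶜ d') := hcl ▸ mem_insert s _
  exact this.resolve_right hs

end Components

section TreeCutPoints

variable {X : Type*} [TopologicalSpace X] [IsTree X]

variable (X) in
def vertices : Set X := {x : X | numComponents ({x}ᶜ : Set X) ≠ 2}

lemma finite_vertices : (vertices X).Finite := IsTree.finite_vertices

lemma exists_mem_connectedComponentIn_mem_vertices {s d : X} (hd : d ≠ s) :
    ∃ y ∈ connectedComponentIn {s}ᶜ d, y ∈ vertices X := by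
  set D := connectedComponentIn {s}ᶜ d
  have hsD : s ∉ D := fun h => connectedComponentIn_subset _ _ h rfl
  set K := closure D
  have hK : K = insert s D := closure_connectedComponentIn_compl_singleton hd
  have : CompactSpace K := isCompact_iff_compactSpace.1 isClosed_closure.isCompact
  have : PreconnectedSpace K :=
    isPreconnected_iff_preconnectedSpace.1 isPreconnected_connectedComponentIn.closure
  obtain ⟨y, hys, hy⟩ := exists_ne_isPreconnected_compl_singleton (s := ⟨s, hK ▸ mem_insert s D⟩)
    (t := ⟨d, subset_closure (mem_connectedComponentIn hd)⟩) (Subtype.coe_ne_coe.1 hd)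
  have hyD : (y : X) ∈ D := ((hK ▸ y.2 : (y : X) ∈ insert s D)).resolve_left
    (Subtype.coe_ne_coe.2 hys)
  -- `{y}ᶜ` is `Dᶜ` glued at `s` to `closure D \ {y}`, and both pieces are connected.
  have hcompl : ({(y : X)}ᶜ : Set X) = Dᶜ ∪ Subtype.val '' {y}ᶜ := by
    ext x
    constructor
    · intro hxy
      by_cases hxD : x ∈ D
      · exact Or.inr ⟨⟨x, subset_closure hxD⟩, fun h => hxy (congrArg Subtype.val h), rfl⟩
      · exact Or.inl hxD
    · rintro (hx | ⟨x, hx, rfl⟩) hxy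
      exacts [hx (mem_singleton_iff.1 hxy ▸ hyD), hx (Subtype.ext hxy)]
  have hpre : IsPreconnected ({(y : X)}ᶜ : Set X) := hcompl ▸
    (splitsAt_connectedComponentIn hd).symm.isPreconnected_compl.union s hsD
      ⟨_, Ne.symm hys, rfl⟩ (hy.image _ continuous_subtype_val.continuousOn)
  refine ⟨y, hyD, ?_⟩
  have hs : s ∈ ({(y : X)}ᶜ : Set X) := fun h => hys (Subtype.ext (mem_singleton_iff.1 h).symm)
  simp [vertices, numComponents_eq_one ⟨s, hs⟩ hpre]

lemma mem_connectedComponentIn_of_mem_arc {a b c s : X} (hc : c ∈ arc a b) (hcs : c ≠ s)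
    (hb : b ∈ connectedComponentIn {s}ᶜ a) : c ∈ connectedComponentIn {s}ᶜ a := by
  have hs : s ∉ arc a c ∨ s ∉ arc c b := by
    by_contra! h
    exact hcs ((arc_inter_arc_of_mem hc ▸ h : s ∈ ({c} : Set X))).symm
  rcases hs with hs | hs
  · exact (isPreconnected_arc a c).subset_connectedComponentIn (left_mem_arc a c)
      (fun x hx (hxs : x = s) => hs (hxs ▸ hx)) (right_mem_arc a c)
  · rw [connectedComponentIn_eq hb]
    exact (isPreconnected_arc c b).subset_connectedComponentIn (right_mem_arc c b)
      (fun x hx (hxs : x = s) => hs (hxs ▸ hx)) (left_mem_arc c b)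

theorem exists_mem_arc_notMem_connectedComponentIn {a b : X} (hab : a ≠ b) :
    ∃ s ∈ arc a b, s ≠ a ∧ s ≠ b ∧ b ∉ connectedComponentIn {s}ᶜ a := by
  by_contra! h
  set U := arc a b \ ({a, b} ∪ vertices X)
  have hU : U.Infinite := (arc_infinite hab).sdiff ((toFinite {a, b}).union finite_vertices)
  have hmemU {s : X} (hs : s ∈ U) : s ∈ arc a b ∧ s ≠ a ∧ s ≠ b ∧ s ∉ vertices X := by
    simp only [U, mem_sdiff, mem_union, mem_insert_iff, mem_singleton_iff, not_or] at hs
    exact ⟨hs.1, hs.2.1.1, hs.2.1.2, hs.2.2⟩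
  -- Each `s ∈ U` has a second complementary component, which contains a vertex `g s`.
  have hside (s : X) (hs : s ∈ U) : ∃ y ∈ vertices X, ∃ d ≠ s,
      y ∈ connectedComponentIn {s}ᶜ d ∧ d ∉ connectedComponentIn {s}ᶜ a := by
    obtain ⟨-, -, -, hsv⟩ := hmemU hs
    obtain ⟨d, hds, hd⟩ := exists_notMem_connectedComponentIn (not_not.1 hsv) a
    obtain ⟨y, hy, hyv⟩ := exists_mem_connectedComponentIn_mem_vertices hds
    exact ⟨y, hyv, d, hds, hy, hd⟩
  choose! g hgv d hds hgd hd using hside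
  have hfar {s s' : X} (hs : s ∈ U) (hs' : s' ∈ U) (hne : s' ≠ s) :
      s' ∉ connectedComponentIn {s}ᶜ (d s) := by
    intro hs'd
    obtain ⟨hsab, hsa, hsb, -⟩ := hmemU hs
    have hs'a := mem_connectedComponentIn_of_mem_arc (hmemU hs').1 hne (h s hsab hsa hsb)
    apply hd s hs
    rw [connectedComponentIn_eq hs'a, ← connectedComponentIn_eq hs'd]
    exact mem_connectedComponentIn (hds s hs)
  have hinj : InjOn g U := fun s hs s' hs' hg => by
    by_contra hne
    exact hne (eq_of_mem_connectedComponentIn_compl_singleton (hds s hs) (hds s' hs')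
      (hgd s hs) (hg ▸ hgd s' hs') (hfar hs' hs hne) (hfar hs hs' (Ne.symm hne)))
  exact hU.image hinj (finite_vertices.subset (image_subset_iff.2 hgv))

lemma IsPreconnected.inter_image_Icc_nonempty {T : Set X} (hT : IsPreconnected T)
    {γ : ℝ → X} (hc : ContinuousOn γ (Icc 0 1)) (hi : InjOn γ (Icc 0 1)) (h0 : γ 0 ∈ T)
    (h1 : γ 1 ∈ T) {t₁ t₂ : ℝ} (ht₁ : 0 ≤ t₁) (h₁₂ : t₁ < t₂) (ht₂ : t₂ ≤ 1) :
    (T ∩ γ '' Icc t₁ t₂).Nonempty := by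
  by_contra hT₁₂
  have ht₁I : t₁ ∈ Icc (0 : ℝ) 1 := ⟨ht₁, h₁₂.le.trans ht₂⟩
  have ht₂I : t₂ ∈ Icc (0 : ℝ) 1 := ⟨ht₁.trans h₁₂.le, ht₂⟩
  have hne : γ t₁ ≠ γ t₂ := fun h => h₁₂.ne (hi ht₁I ht₂I h)
  obtain ⟨s, hs, hs₁, hs₂, hsep⟩ := exists_mem_arc_notMem_connectedComponentIn hne
  rw [← image_Icc_eq_arc hc hi ht₁ h₁₂.le ht₂] at hs
  obtain ⟨w, hw, rfl⟩ := hs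
  have hwI : w ∈ Icc (0 : ℝ) 1 := ⟨ht₁.trans hw.1, hw.2.trans ht₂⟩
  have hw₁ : t₁ < w := hw.1.lt_of_ne fun h => hs₁ (h ▸ rfl)
  have hw₂ : w < t₂ := hw.2.lt_of_ne fun h => hs₂ (h ▸ rfl)
  -- `T` together with the two outer pieces of the arc joins `γ t₁` to `γ t₂` avoiding `γ w`.
  set T' := T ∪ γ '' Icc 0 t₁ ∪ γ '' Icc t₂ 1
  have hT' : IsPreconnected T' :=
    (IsPreconnected.union _ h0 (mem_image_of_mem γ (left_mem_Icc.2 ht₁)) hT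
      (isPreconnected_Icc.image γ (hc.mono (Icc_subset_Icc le_rfl ht₁I.2)))).union _
      (Or.inl h1) (mem_image_of_mem γ (right_mem_Icc.2 ht₂))
      (isPreconnected_Icc.image γ (hc.mono (Icc_subset_Icc ht₂I.1 le_rfl)))
  have hwT' : γ w ∉ T' := by
    rintro ((hwT | hwT) | hwT)
    · exact hT₁₂ ⟨γ w, hwT, mem_image_of_mem γ hw⟩
    · exact hw₁.not_ge ((hi.mem_image_iff (Icc_subset_Icc le_rfl ht₁I.2) hwI).1 hwT).2
    · exact hw₂.not_ge ((hi.mem_image_iff (Icc_subset_Icc ht₂I.1 le_rfl) hwI).1 hwT).1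
  exact hsep (hT'.subset_connectedComponentIn
    (Or.inl (Or.inr (mem_image_of_mem γ (right_mem_Icc.2 ht₁))))
    (fun z hz (hzw : z = γ w) => hwT' (hzw ▸ hz))
    (Or.inr (mem_image_of_mem γ (left_mem_Icc.2 ht₂))))

theorem arc_subset_closure_of_isPreconnected {T : Set X} (hT : IsPreconnected T) {x y : X}
    (hx : x ∈ T) (hy : y ∈ T) : arc x y ⊆ closure T := by
  rcases eq_or_ne x y with rfl | hxy
  · simpa using subset_closure hx
  obtain ⟨γ, hc, hi, rfl, rfl, himg⟩ := exists_param_arc hxy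
  rw [← himg]
  rintro _ ⟨r, hr, rfl⟩
  by_contra hp
  have hr0 : r ≠ 0 := by rintro rfl; exact hp (subset_closure hx)
  have hr1 : r ≠ 1 := by rintro rfl; exact hp (subset_closure hy)
  have hnhds : Ioo 0 1 ∩ γ ⁻¹' (closure T)ᶜ ∈ 𝓝 r := by
    have hrI : r ∈ Ioo 0 1 := ⟨hr.1.lt_of_ne' hr0, hr.2.lt_of_ne hr1⟩
    exact Filter.inter_mem (Ioo_mem_nhds hrI.1 hrI.2) <|
      (hc.continuousAt (Icc_mem_nhds hrI.1 hrI.2)).preimage_mem_nhds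
        (isClosed_closure.isOpen_compl.mem_nhds hp)
  obtain ⟨l, u, ⟨hl, hu⟩, hsub⟩ := mem_nhds_iff_exists_Ioo_subset.1 hnhds
  obtain ⟨t₁, hlt₁, ht₁⟩ := exists_between hl
  obtain ⟨t₂, ht₂, ht₂u⟩ := exists_between hu
  have hIcc : Icc t₁ t₂ ⊆ Ioo 0 1 ∩ γ ⁻¹' (closure T)ᶜ :=
    (Icc_subset_Ioo hlt₁ ht₂u).trans hsub
  have h₁₂ : t₁ < t₂ := ht₁.trans ht₂
  obtain ⟨_, hwT, w, hw, rfl⟩ := hT.inter_image_Icc_nonempty hc hi hx hy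
    (hIcc (left_mem_Icc.2 h₁₂.le)).1.1.le h₁₂ (hIcc (right_mem_Icc.2 h₁₂.le)).1.2.le
  exact (hIcc hw).2 (subset_closure hwT)

lemma arc_subset_union_arc (a b c : X) : arc a c ⊆ arc a b ∪ arc b c :=
  ((isClosed_arc a b).union (isClosed_arc b c)).closure_eq ▸
    arc_subset_closure_of_isPreconnected
      ((isPreconnected_arc a b).union b (right_mem_arc a b) (left_mem_arc b c)
        (isPreconnected_arc b c))
      (Or.inl (left_mem_arc a b)) (Or.inr (right_mem_arc b c))

lemma eventually_notMem_arc {m w₀ : X} (h : w₀ ≠ m) : ∀ᶠ w in 𝓝 w₀, m ∉ arc w₀ w := by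
  obtain ⟨V, hV, hVc, hVm⟩ := exists_mem_nhds_isClosed_subset (isOpen_compl_singleton.mem_nhds h)
  filter_upwards [connectedComponentIn_mem_nhds hV] with w hw hm
  have := arc_subset_closure_of_isPreconnected isPreconnected_connectedComponentIn
    (mem_connectedComponentIn (mem_of_mem_nhds hV)) hw hm
  exact hVm (closure_minimal (connectedComponentIn_subset V w₀) hVc this) rfl

lemma notMem_connectedComponentIn_of_mem_arc {q q' m : X} (hm : m ∈ arc q q') (hq : q ≠ m) :
    q' ∉ connectedComponentIn {m}ᶜ q := by
  intro hq'
  set u := {w : X | w ≠ m ∧ m ∉ arc q w}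
  set v := {w : X | w ≠ m ∧ m ∈ arc q w}
  have hu : IsOpen u := isOpen_iff_mem_nhds.2 fun w₀ hw₀ => by
    filter_upwards [isOpen_compl_singleton.mem_nhds hw₀.1, eventually_notMem_arc hw₀.1]
      with w hw hmw
    exact ⟨hw, fun hm => (arc_subset_union_arc q w₀ w hm).elim hw₀.2 hmw⟩
  have hv : IsOpen v := isOpen_iff_mem_nhds.2 fun w₀ hw₀ => by
    filter_upwards [isOpen_compl_singleton.mem_nhds hw₀.1, eventually_notMem_arc hw₀.1]
      with w hw hmw
    exact ⟨hw, (arc_subset_union_arc q w w₀ hw₀.2).resolve_right (arc_comm w₀ w ▸ hmw)⟩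
  have hcov : connectedComponentIn {m}ᶜ q ⊆ u ∪ v := fun w hw => by
    have hwm : w ≠ m := connectedComponentIn_subset _ _ hw
    by_cases hmw : m ∈ arc q w
    exacts [Or.inr ⟨hwm, hmw⟩, Or.inl ⟨hwm, hmw⟩]
  have hqu : q ∈ connectedComponentIn {m}ᶜ q ∩ u :=
    ⟨mem_connectedComponentIn hq, hq, by simpa using hq.symm⟩
  exact (isPreconnected_connectedComponentIn.subset_left_of_subset_union hu hv
    (disjoint_left.2 fun w hwu hwv => hwu.2 hwv.2) hcov ⟨q, hqu⟩ hq').2 hm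

theorem arc_subset_of_isPreconnected {T : Set X} (hT : IsPreconnected T) {x y : X}
    (hx : x ∈ T) (hy : y ∈ T) : arc x y ⊆ T := by
  intro m hm
  by_contra hmT
  have hxm : x ≠ m := fun h => hmT (h ▸ hx)
  exact notMem_connectedComponentIn_of_mem_arc hm hxm
    (hT.subset_connectedComponentIn hx (fun z hz (hzm : z = m) => hmT (hzm ▸ hz)) hy)

end TreeCutPoints

section FixedPoint

variable {X : Type*} [TopologicalSpace X] [IsTree X]

lemma isClosed_setOf_mem_arc (a : X) : IsClosed {p : X × X | p.1 ∈ arc a p.2} := by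
  refine isOpen_compl_iff.1 (isOpen_iff_mem_nhds.2 ?_)
  rintro ⟨v, w⟩ (hvw : v ∉ arc a w)
  have hav : a ≠ v := fun h => hvw (h ▸ left_mem_arc a w)
  -- `z ∈ [a, v] \ [a, w]` stays in `[a, v']` and off `[a, w']` for `(v', w')` near `(v, w)`.
  obtain ⟨z, ⟨hzv, hzw⟩, hz⟩ :=
    exists_mem_arc_ne_of_mem_nhds hav ((isClosed_arc a w).isOpen_compl.mem_nhds hvw)
  have hwz : w ≠ z := fun h => hzw (h ▸ right_mem_arc a w)
  have hv' : ∀ᶠ v' in 𝓝 v, z ∈ arc a v' := (eventually_notMem_arc (Ne.symm hz)).mono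
    fun v' h => (arc_subset_union_arc a v' v hzv).resolve_right (arc_comm v v' ▸ h)
  have hw' : ∀ᶠ w' in 𝓝 w, z ∉ arc a w' := (eventually_notMem_arc hwz).mono
    fun w' h hz' => (arc_subset_union_arc a w w' hz').elim hzw h
  filter_upwards [hv'.prod_nhds hw'] with p hp hmem
  exact hp.2 (arc_subset_arc_left hmem hp.1)

lemma exists_further_mem_arc_apply {Y : Set X} (hY : IsPreconnected Y) {f : Y → X}
    (hf : Continuous f) {a : X} {z : Y} (hz : (z : X) ∈ arc a (f z)) (hfz : f z ≠ z) {w : X}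
    (hw : w ∈ arc (z : X) (f z)) (hwz : w ≠ z) (hwY : w ∈ Y) :
    ∃ z' : Y, z' ≠ z ∧ (z : X) ∈ arc a z' ∧ (z' : X) ∈ arc a (f z') := by
  obtain ⟨V₀, hV₀, hV₀c, hV₀z⟩ :=
    exists_mem_nhds_isClosed_subset (isOpen_compl_singleton.mem_nhds hfz)
  set V := connectedComponentIn V₀ (f z)
  obtain ⟨O, hO, hOV⟩ := (mem_nhds_subtype Y z _).1
    (hf.continuousAt.preimage_mem_nhds (connectedComponentIn_mem_nhds hV₀ (x := f z)))
  obtain ⟨z', ⟨hz'w, hz'O, hz'V₀⟩, hz'z⟩ := exists_mem_arc_ne_of_mem_nhds hwz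
    (Filter.inter_mem hO (hV₀c.isOpen_compl.mem_nhds fun h => hV₀z h rfl))
  have hz'Y : z' ∈ Y := arc_subset_of_isPreconnected hY hwY z.2 hz'w
  have hfz' : f ⟨z', hz'Y⟩ ∈ V := hOV hz'O
  have hz'fz : z' ∈ arc (z : X) (f z) := arc_subset_arc_left hw (arc_comm w z ▸ hz'w)
  have hz'a : z' ∈ arc a (f z) := arc_subset_arc_right hz hz'fz
  refine ⟨⟨z', hz'Y⟩, fun h => hz'z (congrArg Subtype.val h), ?_, ?_⟩
  · rcases (arc_union_arc_of_mem hz'a).symm ▸ hz with h | h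
    · exact h
    · have : (z : X) ∈ arc (z : X) z' ∩ arc z' (f z) := ⟨left_mem_arc _ _, h⟩
      rw [arc_inter_arc_of_mem hz'fz] at this
      exact absurd this.symm hz'z
  · -- `[a, f z'] ∪ V` is connected and contains `a` and `f z`, hence `z'`, which is not in `V`.
    have hT : IsPreconnected (arc a (f ⟨z', hz'Y⟩) ∪ V) :=
      (isPreconnected_arc _ _).union _ (right_mem_arc _ _) hfz' isPreconnected_connectedComponentIn
    rcases arc_subset_of_isPreconnected hT (Or.inl (left_mem_arc _ _))
      (Or.inr (mem_connectedComponentIn (mem_of_mem_nhds hV₀))) hz'a with h | h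
    · exact h
    · exact absurd (connectedComponentIn_subset _ _ h) hz'V₀

end FixedPoint

/-- Lemma 3 of the paper: if `Y` is a subtree of a tree `X` and `f : Y → X` is
continuous with `(a, f a] ∩ Y ≠ ∅` for every `a ∈ Y`, then `f` has a fixed point. -/
theorem stmt4 {X : Type*} [TopologicalSpace X] [IsTree X]
    (Y : Set X) (hYc : IsClosed Y) (hYconn : IsConnected Y)
    (f : Y → X) (hf : Continuous f)
    (h : ∀ (a : Y) (A : Set X), IsArcConn A (a : X) (f a) →
      ((A \ {(a : X)}) ∩ Y).Nonempty) :
    ∃ z : Y, f z = (z : X) := by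
  obtain ⟨a, ha⟩ := hYconn.nonempty
  have : CompactSpace Y := isCompact_iff_compactSpace.1 hYc.isCompact
  set P : Set Y := {y | (y : X) ∈ arc a (f y)}
  have hP : IsClosed P := (isClosed_setOf_mem_arc a).preimage (continuous_subtype_val.prodMk hf)
  have hcone (y : Y) : IsClosed {y' : Y | (y : X) ∈ arc a y'} :=
    (isClosed_setOf_mem_arc a).preimage (continuous_const.prodMk continuous_subtype_val)
  obtain ⟨z, hzP, hmax⟩ := exists_maximal_of_isCompact_upper (S := P) ⟨⟨a, ha⟩, left_mem_arc a _⟩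
    (fun y y' : Y => (y : X) ∈ arc a y') (fun y _ => right_mem_arc a y)
    (fun _ _ _ _ _ _ hxy hyw => arc_subset_arc_left hyw hxy)
    (fun y _ => (hP.inter (hcone y)).isCompact)
  by_contra! hfix
  obtain ⟨w, ⟨hw, hwz⟩, hwY⟩ := h z (arc (z : X) (f z)) (isArcConn_arc _ _)
  obtain ⟨z', hz'z, hzz', hz'P⟩ :=
    exists_further_mem_arc_apply hYconn.isPreconnected hf hzP (hfix z) hw hwz hwY
  exact hz'z (Subtype.ext (eq_of_mem_arc_of_mem_arc hzz' (hmax z' hz'P hzz')))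
end

section
/- Let f : [0,1] → [0,1] be continuous with topological entropy zero. Then every period of a periodic point of f is a power of 2. -/
/-!
Suppose some period is not a power of two. Writing it as `2 ^ k * q` with `q` odd and `q ≠ 1`,
the point has minimal period `q` for `g = f^[2 ^ k]`. On that orbit let `b` be the rightmost point
moved to the right and `c` the next orbit point, so `g c ≤ b < c ≤ g b`. If some orbit point
`v > b` has `g v > b`, the interval `[b, g b]` covers itself and grows under iteration until it
covers `[b, v]`; hence `[b, c]` and `[c, v]` both cover `[b, v]` under an iterate of `g`
(turbulence). If some orbit point `u ≤ b` has `g u ≤ b`, the mirror image argument applies.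
Otherwise `g` swaps the two sides of `b` along the orbit, which is impossible for an odd cycle.

Turbulence gives a horseshoe for the square: two disjoint closed intervals each covering both.
A horseshoe for `f^[n]` provides, for each word in `{0, 1}^m`, a point following that itinerary,
and these `2 ^ m` points form an `(n * m)`-dynamical net, so the entropy is at least `log 2 / n`.
-/

open Set Function Dynamics UniformSpace OrderDual

lemma IsPreconnected.Icc_subset_image {X β : Type*} [TopologicalSpace X] [LinearOrder β]
    [TopologicalSpace β] [OrderClosedTopology β] {S : Set X} {f : X → β} (hS : IsPreconnected S)
    (hf : ContinuousOn f S) {p q : X} (hp : p ∈ S) (hq : q ∈ S) {c d : β} (hc : f p ≤ c)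
    (hd : d ≤ f q) : Icc c d ⊆ f '' S :=
  (Icc_subset_Icc hc hd).trans
    ((hS.image f hf).Icc_subset (mem_image_of_mem f hp) (mem_image_of_mem f hq))

structure IsHorseshoe {X : Type*} [TopologicalSpace X] (T : X → X) (J₀ J₁ : Set X) : Prop where
  isCompact_left : IsCompact J₀
  isCompact_right : IsCompact J₁
  disjoint : Disjoint J₀ J₁
  nonempty_left : J₀.Nonempty
  nonempty_right : J₁.Nonempty
  subset_image_left : J₀ ∪ J₁ ⊆ T '' J₀
  subset_image_right : J₀ ∪ J₁ ⊆ T '' J₁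

lemma IsHorseshoe.cond_subset_image {X : Type*} [TopologicalSpace X] {T : X → X} {J₀ J₁ : Set X}
    (h : IsHorseshoe T J₀ J₁) (i j : Bool) : cond j J₁ J₀ ⊆ T '' cond i J₁ J₀ := by
  cases i <;> cases j
  exacts [subset_union_left.trans h.subset_image_left,
    subset_union_right.trans h.subset_image_left,
    subset_union_left.trans h.subset_image_right,
    subset_union_right.trans h.subset_image_right]

lemma exists_forall_iterate_mem {X ι : Type*} {T : X → X} {J : ι → Set X} (hJ : ∀ i j, J j ⊆ T '' J i)
    (hne : ∀ i, (J i).Nonempty) (w : ℕ → ι) (m : ℕ) : ∃ x, ∀ k ≤ m, T^[k] x ∈ J (w k) := by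
  induction m generalizing w with
  | zero =>
    obtain ⟨x, hx⟩ := hne (w 0)
    exact ⟨x, fun k hk => by rwa [Nat.le_zero.1 hk]⟩
  | succ m ih =>
    obtain ⟨y, hy⟩ := ih (fun k => w (k + 1))
    obtain ⟨x, hx, rfl⟩ := hJ (w 0) (w 1) (hy 0 m.zero_le)
    refine ⟨x, fun k hk => ?_⟩
    cases k with
    | zero => exact hx
    | succ k => exact hy k (by omega)

namespace IsHorseshoe

variable {X : Type*} [UniformSpace X] {T : X → X} {J₀ J₁ : Set X} {n : ℕ}

lemma pow_le_netMaxcard (h : IsHorseshoe (T^[n]) J₀ J₁) (hn : 0 < n) {V : SetRel X X}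
    (hV : V ∈ uniformity X) (hVJ : Disjoint (⋃ x ∈ J₀, ball x V) (⋃ x ∈ J₁, ball x V)) (m : ℕ) :
    2 ^ m ≤ netMaxcard T univ V (n * m) := by
  classical
  set J : Bool → Set X := fun i => cond i J₁ J₀
  have hsep : ∀ i j, i ≠ j → Disjoint (⋃ x ∈ J i, ball x V) (⋃ x ∈ J j, ball x V) := by
    intro i j hij
    cases i <;> cases j
    exacts [absurd rfl hij, hVJ, hVJ.symm, absurd rfl hij]
  choose x hx using fun w : Fin m → Bool =>
    exists_forall_iterate_mem h.cond_subset_image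
      (Bool.forall_bool.2 ⟨h.nonempty_left, h.nonempty_right⟩)
      (fun k => if hk : k < m then w ⟨k, hk⟩ else false) m
  have hball : ∀ w w', w ≠ w' → Disjoint (ball (x w) (dynEntourage T V (n * m)))
      (ball (x w') (dynEntourage T V (n * m))) := by
    intro w w' hww'
    obtain ⟨k, hk⟩ := Function.ne_iff.1 hww'
    have hkm : n * k < n * m := Nat.mul_lt_mul_of_pos_left k.2 hn
    have hxk : ∀ w, T^[n * k] (x w) ∈ J (w k) := fun w => by
      simpa [iterate_mul] using hx w k k.2.le
    refine Set.disjoint_left.2 fun y hy hy' =>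
      (hsep _ _ hk).notMem_of_mem_left (a := T^[n * k] y) ?_ ?_
    · exact mem_biUnion (hxk w) ((mem_dynEntourage.1 hy) _ hkm)
    · exact mem_biUnion (hxk w') ((mem_dynEntourage.1 hy') _ hkm)
  have hcenter : ∀ w, x w ∈ ball (x w) (dynEntourage T V (n * m)) :=
    fun w => mem_dynEntourage.2 fun _ _ => refl_mem_uniformity hV
  have hinj : Injective x := fun w w' hxw => by_contra fun hww' =>
    Set.disjoint_left.1 (hball w w' hww') (hcenter w) (hxw ▸ hcenter w')
  have hnet : IsDynNetIn T univ V (n * m) (Finset.univ.image x) := by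
    refine ⟨subset_univ _, fun y hy y' hy' hyy' => ?_⟩
    simp only [Finset.coe_image, Finset.coe_univ, image_univ, mem_range] at hy hy'
    obtain ⟨⟨w, rfl⟩, ⟨w', rfl⟩⟩ := And.intro hy hy'
    exact hball w w' (fun hww' => hyy' (hww' ▸ rfl))
  have := hnet.card_le_netMaxcard
  rwa [Finset.card_image_of_injective _ hinj, Finset.card_univ, Fintype.card_fun,
    Fintype.card_bool, Fintype.card_fin, Nat.cast_pow, Nat.cast_ofNat] at this

theorem log_two_le_mul_coverEntropy [T2Space X] (h : IsHorseshoe (T^[n]) J₀ J₁) (hn : 0 < n) :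
    ENNReal.log 2 ≤ n * coverEntropy T univ := by
  obtain ⟨V, hV, hVJ⟩ :=
    h.disjoint.exists_uniform_thickening h.isCompact_left h.isCompact_right.isClosed
  have hmono : Monotone fun m => (netMaxcard T univ V m : ENNReal) :=
    fun _ _ hkm => ENat.toENNReal_mono (netMaxcard_monotone_time T univ V hkm)
  calc ENNReal.log 2 = ExpGrowth.expGrowthSup fun m => 2 ^ m := ExpGrowth.expGrowthSup_pow.symm
    _ ≤ ExpGrowth.expGrowthSup fun m => (netMaxcard T univ V (n * m) : ENNReal) :=
      ExpGrowth.expGrowthSup_monotone fun m => by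
        simpa using ENat.toENNReal_mono (h.pow_le_netMaxcard hn hV hVJ m)
    _ = n * netEntropyEntourage T univ V := hmono.expGrowthSup_comp_mul hn.ne'
    _ ≤ n * coverEntropy T univ := by
      gcongr
      exact netEntropyEntourage_le_coverEntropy T univ hV

end IsHorseshoe

section Turbulence

variable {α : Type*} [LinearOrder α] {G : α → α} {a b c : α}

def IsTurbulent (G : α → α) (a c b : α) : Prop :=
  a < c ∧ c < b ∧ Icc a b ⊆ G '' Icc a c ∧ Icc a b ⊆ G '' Icc c b

lemma IsTurbulent.dual (h : IsTurbulent G a c b) :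
    IsTurbulent (toDual ∘ G ∘ ofDual) (toDual b) (toDual c) (toDual a) := by
  obtain ⟨hac, hcb, ha, hb⟩ := h
  refine ⟨hcb, hac, ?_, ?_⟩ <;> rw [Icc_toDual, Icc_toDual]
  exacts [hb, ha]

end Turbulence

section IntervalMap

variable {α : Type*} [ConditionallyCompleteLinearOrder α] [TopologicalSpace α] [OrderTopology α]
  [DenselyOrdered α] {G : α → α} {a b c : α}

lemma exists_uIcc_subset_image_of_ne {S : Set α} (hG : ContinuousOn G S) (hS : S.OrdConnected)
    (hcS : c ∈ S) (hac : a < c) (hcb : c ≤ b) (hcov : Icc a b ⊆ G '' S) (hGc : G c ≠ b) :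
    ∃ p ∈ S, p ≠ c ∧ ∃ y ∈ S, y ≠ c ∧ Icc c b ⊆ G '' uIcc p y := by
  obtain ⟨p, hpS, hGp⟩ := hcov ⟨(hac.trans_le hcb).le, le_rfl⟩
  have hyc : ∃ y ∈ S, y ≠ c ∧ G y ≤ c := by
    rcases lt_or_ge (G c) c with hlt | hle
    · obtain ⟨y, hy, hGy⟩ := isPreconnected_uIcc.Icc_subset_image
        (hG.mono (hS.uIcc_subset hcS hpS)) left_mem_uIcc right_mem_uIcc hlt.le (hGp ▸ hcb)
        ⟨le_rfl, le_rfl⟩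
      exact ⟨y, hS.uIcc_subset hcS hpS hy, by rintro rfl; exact hlt.ne hGy, hGy.le⟩
    · obtain ⟨y, hyS, hGy⟩ := hcov ⟨le_rfl, (hac.trans_le hcb).le⟩
      exact ⟨y, hyS, by rintro rfl; exact (hac.trans_le hle).ne' hGy, hGy ▸ hac.le⟩
  obtain ⟨y, hyS, hyc, hGy⟩ := hyc
  exact ⟨p, hpS, by rintro rfl; exact hGc hGp, y, hyS, hyc, isPreconnected_uIcc.Icc_subset_image
    (hG.mono (hS.uIcc_subset hpS hyS)) right_mem_uIcc left_mem_uIcc hGy hGp.ge⟩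

lemma IsTurbulent.exists_isHorseshoe_of_ne (hG : Continuous G) (h : IsTurbulent G a c b)
    (hGc : G c ≠ b) : ∃ J₀ J₁, IsHorseshoe (G^[2]) J₀ J₁ := by
  obtain ⟨hac, hcb, ha, hb⟩ := h
  obtain ⟨p₀, hp₀, hp₀c, y₀, hy₀, hy₀c, h₀⟩ := exists_uIcc_subset_image_of_ne hG.continuousOn
    ordConnected_Icc (right_mem_Icc.2 hac.le) hac hcb.le ha hGc
  obtain ⟨p₁, hp₁, hp₁c, y₁, hy₁, hy₁c, h₁⟩ := exists_uIcc_subset_image_of_ne hG.continuousOn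
    ordConnected_Icc (left_mem_Icc.2 hcb.le) hac hcb.le hb hGc
  have hJ₀ : uIcc p₀ y₀ ⊆ Iio c :=
    ordConnected_Iio.uIcc_subset (hp₀.2.lt_of_ne hp₀c) (hy₀.2.lt_of_ne hy₀c)
  have hJ₁ : uIcc p₁ y₁ ⊆ Ioi c :=
    ordConnected_Ioi.uIcc_subset (hp₁.1.lt_of_ne' hp₁c) (hy₁.1.lt_of_ne' hy₁c)
  have hJ : uIcc p₀ y₀ ∪ uIcc p₁ y₁ ⊆ Icc a b :=
    union_subset (ordConnected_Icc.uIcc_subset (Icc_subset_Icc_right hcb.le hp₀)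
        (Icc_subset_Icc_right hcb.le hy₀))
      (ordConnected_Icc.uIcc_subset (Icc_subset_Icc_left hac.le hp₁)
        (Icc_subset_Icc_left hac.le hy₁))
  have hcov : ∀ {J : Set α}, Icc c b ⊆ G '' J → Icc a b ⊆ G^[2] '' J := fun h => by
    rw [iterate_succ, iterate_one, image_comp]
    exact hb.trans (image_mono h)
  exact ⟨_, _, isCompact_uIcc, isCompact_uIcc, Iio_disjoint_Ioi_same.mono hJ₀ hJ₁,
    nonempty_uIcc, nonempty_uIcc, hJ.trans (hcov h₀), hJ.trans (hcov h₁)⟩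

theorem IsTurbulent.exists_isHorseshoe (hG : Continuous G) (h : IsTurbulent G a c b) :
    ∃ J₀ J₁, IsHorseshoe (G^[2]) J₀ J₁ := by
  by_cases hGc : G c = b
  · -- then `G c ≠ a`, so the order dual falls under the previous lemma
    exact h.dual.exists_isHorseshoe_of_ne (α := αᵒᵈ) hG
      fun h' => (h.1.trans h.2.1).ne' (hGc.symm.trans h')
  · exact h.exists_isHorseshoe_of_ne hG hGc

lemma isTurbulent_iterate_of_swap (hG : Continuous G) {v : α} {j : ℕ} (hbc : b < c) (hcv : c < v)
    (hGb : c ≤ G b) (hGc : G c ≤ b) (hGv : c ≤ G v) (hv : G^[j] b = v) :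
    IsTurbulent (G^[j + 2]) b c v := by
  have hbc_bc : Icc b c ⊆ G '' Icc b c := isPreconnected_Icc.Icc_subset_image hG.continuousOn
    (right_mem_Icc.2 hbc.le) (left_mem_Icc.2 hbc.le) hGc hGb
  have hbc_cv : Icc b c ⊆ G '' Icc c v := isPreconnected_Icc.Icc_subset_image hG.continuousOn
    (left_mem_Icc.2 hcv.le) (right_mem_Icc.2 hcv.le) hGc hGv
  have hI : Icc b (G b) ⊆ G '' Icc b c := isPreconnected_Icc.Icc_subset_image hG.continuousOn
    (right_mem_Icc.2 hbc.le) (left_mem_Icc.2 hbc.le) hGc le_rfl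
  have hmono : Monotone fun n => G^[n] '' Icc b (G b) := monotone_nat_of_le_succ fun n => by
    rw [iterate_succ, image_comp]
    exact image_mono (hI.trans (image_mono (Icc_subset_Icc_right hGb)))
  have hb : b ∈ Icc b (G b) := left_mem_Icc.2 (hbc.le.trans hGb)
  have hbv : Icc b v ⊆ G^[j] '' Icc b (G b) :=
    (isPreconnected_Icc.image _ (hG.iterate j).continuousOn).Icc_subset
      (hmono j.zero_le (show b ∈ G^[0] '' _ by rwa [iterate_zero, image_id]))
      (hv ▸ mem_image_of_mem _ hb)
  have hcov : ∀ {S : Set α}, Icc b c ⊆ G '' S → Icc b v ⊆ G^[j + 2] '' S := fun h => by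
    rw [iterate_add, iterate_succ, iterate_one, image_comp, image_comp]
    exact hbv.trans (image_mono (hI.trans (image_mono h)))
  exact ⟨hbc, hcv, hcov hbc_bc, hcov hbc_cv⟩

end IntervalMap

section Orbit

variable {α : Type*} {G : α → α} {x : α}

lemma finite_range_iterate_of_mem_periodicPts (hx : x ∈ periodicPts G) :
    (range fun n => G^[n] x).Finite :=
  ((finite_Iio _).image fun n => G^[n] x).subset <| range_subset_iff.2 fun n =>
    ⟨n % minimalPeriod G x, Nat.mod_lt _ (minimalPeriod_pos_of_mem_periodicPts hx),
      iterate_mod_minimalPeriod_eq⟩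

lemma exists_iterate_iterate_eq (hx : x ∈ periodicPts G) (m n : ℕ) :
    ∃ j, G^[j] (G^[m] x) = G^[n] x := by
  have hm : m ≤ minimalPeriod G x * m :=
    Nat.le_mul_of_pos_left m (minimalPeriod_pos_of_mem_periodicPts hx)
  refine ⟨minimalPeriod G x * m - m + n, ?_⟩
  rw [← iterate_add_apply, show minimalPeriod G x * m - m + n + m = n + minimalPeriod G x * m by
    omega, iterate_add_apply, ((isPeriodicPt_minimalPeriod G x).mul_const m).eq]

lemma even_of_isPeriodicPt_of_iterate_succ_mem_iff {S : Set α} {n : ℕ}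
    (hS : ∀ k, G^[k + 1] x ∈ S ↔ G^[k] x ∉ S) (h : IsPeriodicPt G n x) : Even n := by
  have key : ∀ k, G^[k] x ∈ S ↔ (x ∈ S ↔ Even k) := by
    intro k
    induction k with
    | zero => simp
    | succ k ih => rw [hS, ih, Nat.even_add_one]; tauto
  have := key n
  rw [h.eq] at this
  tauto

lemma exists_swap_of_finite [LinearOrder α] {O : Set α} (hO : O.Finite) (hne : O.Nonempty)
    (hGO : MapsTo G O O) (hfix : ∀ z ∈ O, G z ≠ z) :
    ∃ b ∈ O, ∃ c ∈ O, b < c ∧ c ≤ G b ∧ G c ≤ b ∧ ∀ z ∈ O, b < z → c ≤ z := by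
  obtain ⟨m, hmO, hm⟩ := exists_min_image O id hO hne
  obtain ⟨b, ⟨hbO, hbGb⟩, hb⟩ := exists_max_image {z ∈ O | z < G z} id
    (hO.subset (sep_subset _ _)) ⟨m, hmO, (hm _ (hGO hmO)).lt_of_ne (hfix m hmO).symm⟩
  obtain ⟨c, ⟨hcO, hbc⟩, hc⟩ := exists_min_image {z ∈ O | b < z} id
    (hO.subset (sep_subset _ _)) ⟨G b, hGO hbO, hbGb⟩
  have hGcc : G c < c := (not_lt.1 fun h => (hb c ⟨hcO, h⟩).not_gt hbc).lt_of_ne (hfix c hcO)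
  exact ⟨b, hbO, c, hcO, hbc, hc _ ⟨hGO hbO, hbGb⟩,
    not_lt.1 fun h => (hc _ ⟨hGO hcO, h⟩).not_gt hGcc, fun z hz hbz => hc z ⟨hz, hbz⟩⟩

end Orbit

theorem exists_isHorseshoe_iterate_of_odd_minimalPeriod {α : Type*}
    [ConditionallyCompleteLinearOrder α] [TopologicalSpace α] [OrderTopology α] [DenselyOrdered α]
    {G : α → α} {x : α} (hG : Continuous G) (hodd : Odd (minimalPeriod G x))
    (h1 : minimalPeriod G x ≠ 1) : ∃ s, 0 < s ∧ ∃ J₀ J₁, IsHorseshoe (G^[s]) J₀ J₁ := by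
  have hx : x ∈ periodicPts G := minimalPeriod_pos_iff_mem_periodicPts.1 hodd.pos
  set O := range fun n => G^[n] x
  have hGO : MapsTo G O O := by
    rintro _ ⟨n, rfl⟩
    exact ⟨n + 1, iterate_succ_apply' G n x⟩
  have hfix : ∀ z ∈ O, G z ≠ z := by
    rintro _ ⟨n, rfl⟩ h
    exact h1 (minimalPeriod_apply_iterate hx n ▸ minimalPeriod_eq_one_iff_isFixedPt.2 h)
  have hreach : ∀ z ∈ O, ∀ w ∈ O, ∃ j, G^[j] z = w := by
    rintro _ ⟨m, rfl⟩ _ ⟨n, rfl⟩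
    exact exists_iterate_iterate_eq hx m n
  obtain ⟨b, hbO, c, hcO, hbc, hGb, hGc, hc⟩ :=
    exists_swap_of_finite (finite_range_iterate_of_mem_periodicPts hx) ⟨x, 0, rfl⟩ hGO hfix
  by_cases hR : ∃ v ∈ O, b < v ∧ b < G v
  · obtain ⟨v, hvO, hbv, hbGv⟩ := hR
    obtain ⟨j, hj⟩ := hreach b hbO v hvO
    have hcv : c < v := (hc v hvO hbv).lt_of_ne (by rintro rfl; exact hGc.not_gt hbGv)
    refine ⟨(j + 2) * 2, by omega, ?_⟩
    rw [iterate_mul]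
    exact (isTurbulent_iterate_of_swap hG hbc hcv hGb hGc (hc _ (hGO hvO) hbGv) hj
      ).exists_isHorseshoe (hG.iterate _)
  by_cases hL : ∃ u ∈ O, u ≤ b ∧ G u ≤ b
  · obtain ⟨u, huO, hub, hGub⟩ := hL
    obtain ⟨j, hj⟩ := hreach c hcO u huO
    have hub' : u < b := hub.lt_of_ne (by rintro rfl; exact hGub.not_gt (hbc.trans_le hGb))
    refine ⟨(j + 2) * 2, by omega, ?_⟩
    rw [iterate_mul]
    -- the previous case in the order dual, with `c, b, u` in the roles of `b, c, v`
    have hT := isTurbulent_iterate_of_swap (α := αᵒᵈ) (G := toDual ∘ G ∘ ofDual) (b := toDual c)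
      (c := toDual b) (v := toDual u) hG hbc hub' hGc hGb hGub hj
    exact hT.exists_isHorseshoe (α := αᵒᵈ) (hG.iterate _)
  push Not at hR hL
  -- along the orbit, `G` swaps `Iic b` and its complement
  refine (Nat.not_even_iff_odd.2 hodd (even_of_isPeriodicPt_of_iterate_succ_mem_iff (S := Iic b)
    (fun k => ?_) (isPeriodicPt_minimalPeriod G x))).elim
  have hk : G^[k] x ∈ O := ⟨k, rfl⟩
  rw [iterate_succ_apply', mem_Iic, mem_Iic]
  exact ⟨fun h h' => (hL _ hk h').not_ge h, fun h => hR _ hk (not_le.1 h)⟩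

/-- A zero entropy continuous interval map has only periods that are powers of two. -/
theorem stmt9 (f : unitInterval → unitInterval) (hf : Continuous f)
    (h : Dynamics.coverEntropy f Set.univ = 0)
    (x : unitInterval) (hx : x ∈ Function.periodicPts f) :
    ∃ k : ℕ, Function.minimalPeriod f x = 2 ^ k := by
  obtain ⟨k, q, hq, hn⟩ :=
    Nat.exists_eq_two_pow_mul_odd (minimalPeriod_pos_of_mem_periodicPts hx).ne'
  refine ⟨k, ?_⟩
  rcases eq_or_ne q 1 with rfl | hq1
  · rw [hn, mul_one]
  have hgq : minimalPeriod (f^[2 ^ k]) x = q := by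
    rw [minimalPeriod_iterate_eq_div_gcd (pow_ne_zero k two_ne_zero), hn, Nat.gcd_mul_right_left,
      Nat.mul_div_cancel_left _ (by positivity)]
  obtain ⟨s, hs, J₀, J₁, hJ⟩ := exists_isHorseshoe_iterate_of_odd_minimalPeriod
    (hf.iterate (2 ^ k)) (hgq ▸ hq) (hgq ▸ hq1)
  rw [← iterate_mul] at hJ
  have hlog := hJ.log_two_le_mul_coverEntropy (by positivity)
  rw [h, mul_zero] at hlog
  exact (hlog.not_gt (ENNReal.zero_lt_log_iff.2 ENNReal.one_lt_two)).elim
end
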